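/- arXiv:1201.6076 — 12 statements merged into one kernel-verified Lean document; each statement's English description precedes it below -/
import Mathlib

section
/- Let R be a commutative ring such that every prime ideal of R is a direct sum of cyclic R-modules. Then for every prime ideal P of R, the quotient ring R/P is a principal ideal domain. -/
/-- An ideal is an internal direct sum of cyclic `R`-modules. -/
def Ideal.IsDirectSumOfCyclics {R : Type} [CommRing R] (I : Ideal R) : Prop :=
  ∃ (ι : Type) (x : ι → R),
    iSupIndep (fun i => Submodule.span R ({x i} : Set R)) ∧
      (⨆ i, Submodule.span R ({x i} : Set R)) = I

/-!
Write a prime `Q ⊇ P` as `⨆ i, R x_i` with the `R x_i` independent. Then `x_i x_j` lies in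
`R x_i ⊓ R x_j = 0` for `i ≠ j`, so in the domain `R/P` at most one of the images of the `x_i`
is nonzero, and the image of `Q` is generated by it. Every prime of `R/P` is such an image, and
a ring whose primes are all principal is a principal ideal ring.
-/

theorem iSupIndep.mul_eq_zero {R ι : Type*} [CommRing R] {x : ι → R}
    (hx : iSupIndep fun i => Submodule.span R ({x i} : Set R)) {i j : ι} (hij : i ≠ j) :
    x i * x j = 0 :=
  (Submodule.disjoint_def.mp (hx.pairwiseDisjoint hij)) _
    (Ideal.mul_mem_right _ _ (Ideal.mem_span_singleton_self _))
    (Ideal.mul_mem_left _ _ (Ideal.mem_span_singleton_self _))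

theorem Ideal.iSup_span_singleton_isPrincipal_of_mul_eq_zero {S ι : Type*} [CommRing S]
    [IsDomain S] (y : ι → S) (hy : ∀ i j, i ≠ j → y i * y j = 0) :
    (⨆ i, Ideal.span ({y i} : Set S)).IsPrincipal := by
  by_cases hzero : ∀ i, y i = 0
  · simp only [hzero, Set.singleton_zero, Ideal.span_zero, iSup_bot]
    exact bot_isPrincipal
  obtain ⟨i₀, hi₀⟩ := not_forall.mp hzero
  have hothers : ∀ j, j ≠ i₀ → y j = 0 := fun j hj =>
    (mul_eq_zero.mp (hy i₀ j hj.symm)).resolve_left hi₀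
  refine ⟨y i₀, le_antisymm (iSup_le fun i => ?_) (le_iSup (fun i => Ideal.span {y i}) i₀)⟩
  rcases eq_or_ne i i₀ with rfl | hi
  · exact le_rfl
  · simp [hothers i hi]

theorem Ideal.IsDirectSumOfCyclics.map_quotient_isPrincipal {R : Type} [CommRing R]
    {I : Ideal R} (hI : I.IsDirectSumOfCyclics) (P : Ideal R) [P.IsPrime] :
    (I.map (Ideal.Quotient.mk P)).IsPrincipal := by
  obtain ⟨ι, x, hind, rfl⟩ := hI
  have hmap : Ideal.map (Ideal.Quotient.mk P) (⨆ i, Submodule.span R ({x i} : Set R)) =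
      ⨆ i, Ideal.span {Ideal.Quotient.mk P (x i)} := by
    simp only [Ideal.map_iSup]
    exact iSup_congr fun i => (Ideal.map_span _ _).trans (congrArg _ (Set.image_singleton))
  rw [hmap]
  exact Ideal.iSup_span_singleton_isPrincipal_of_mul_eq_zero _ fun i j hij => by
    rw [← map_mul, hind.mul_eq_zero hij, map_zero]

/-- If every prime ideal of `R` is a direct sum of cyclic modules, then `R/P` is a PID
for every prime ideal `P`. -/
theorem quotient_by_prime_isPID_of_primes_directSumOfCyclics (R : Type) [CommRing R]
    (h : ∀ P : Ideal R, P.IsPrime → P.IsDirectSumOfCyclics) :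
    ∀ P : Ideal R, P.IsPrime → IsPrincipalIdealRing (R ⧸ P) ∧ IsDomain (R ⧸ P) := by
  intro P hP
  refine ⟨IsPrincipalIdealRing.of_prime fun Q hQ => ?_, Ideal.Quotient.isDomain P⟩
  rw [← Ideal.map_comap_of_surjective _ Ideal.Quotient.mk_surjective Q]
  exact (h _ (hQ.comap _)).map_quotient_isPrincipal P
end

section
/- Let R be a commutative ring such that every prime ideal of R is a direct sum of cyclic R-modules. Then the Krull dimension of R is at most 1. -/
/-!
Modulo a prime `p`, a direct sum of cyclic ideals becomes principal in the domain `R ⧸ p`,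
because distinct generators multiply to zero. A chain of primes `p < q < r` would therefore give
principal primes `0 < (x) < (y)` in `R ⧸ p`; but `x` is a prime element, hence irreducible, so
its proper divisor `y` is a unit.
-/

open Ideal

theorem mul_eq_zero_of_iSupIndep_span_singleton {R ι : Type*} [CommRing R] {x : ι → R}
    (hx : iSupIndep fun i => Submodule.span R {x i}) {i j : ι} (hij : i ≠ j) :
    x i * x j = 0 :=
  Submodule.disjoint_def.mp (hx.pairwiseDisjoint hij) _
    (mul_mem_right (x j) _ (mem_span_singleton_self (x i)))
    (mul_mem_left _ (x i) (mem_span_singleton_self (x j)))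

theorem Ideal.IsDirectSumOfCyclics.map_isPrincipal {R : Type} {S : Type*} [CommRing R]
    [CommRing S] [IsDomain S] {P : Ideal R} (hP : P.IsDirectSumOfCyclics) (f : R →+* S) :
    (P.map f).IsPrincipal := by
  obtain ⟨ι, x, hx, rfl⟩ := hP
  have hmap : Ideal.map f (⨆ i, Submodule.span R {x i}) = ⨆ i, span {f (x i)} := by
    simp only [map_iSup, Ideal.span, map_span, Set.image_singleton]
  rw [hmap]
  by_cases hzero : ∀ i, f (x i) = 0
  · simp only [hzero, span_singleton_eq_bot.mpr, iSup_bot]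
    exact bot_isPrincipal
  push Not at hzero
  obtain ⟨i₀, hi₀⟩ := hzero
  have hvanish (i : ι) (hi : i ≠ i₀) : f (x i) = 0 := by
    have : f (x i) * f (x i₀) = 0 := by
      rw [← map_mul, mul_eq_zero_of_iSupIndep_span_singleton hx hi, map_zero]
    exact (mul_eq_zero.mp this).resolve_right hi₀
  refine ⟨f (x i₀), le_antisymm (iSup_le fun i => ?_) (le_iSup (fun i => span {f (x i)}) i₀)⟩
  obtain rfl | hi := eq_or_ne i i₀
  · exact le_rfl
  · simp [hvanish i hi]

theorem Ideal.eq_top_of_lt_of_isPrincipal {D : Type*} [CommRing D] [IsDomain D]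
    {I J : Ideal D} [I.IsPrime] [I.IsPrincipal] [J.IsPrincipal] (hI : I ≠ ⊥) (hIJ : I < J) :
    J = ⊤ := by
  obtain ⟨x, rfl⟩ : ∃ x, I = span {x} := ⟨_, (span_singleton_generator I).symm⟩
  obtain ⟨y, rfl⟩ : ∃ y, J = span {y} := ⟨_, (span_singleton_generator J).symm⟩
  have hprime : Prime x := (span_singleton_prime (by simpa using hI)).mp ‹_›
  obtain ⟨-, c, hc, hxc⟩ := span_singleton_lt_span_singleton.mp hIJ
  exact span_singleton_eq_top.mpr
    ((hprime.irreducible.isUnit_or_isUnit hxc).resolve_right hc)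

theorem Ideal.map_quotientMk_not_isPrincipal_of_lt_of_lt {R : Type*} [CommRing R]
    {p q r : Ideal R} [p.IsPrime] [q.IsPrime] [r.IsPrime] (hpq : p < q) (hqr : q < r)
    (hq : (q.map (Ideal.Quotient.mk p)).IsPrincipal) :
    ¬ (r.map (Ideal.Quotient.mk p)).IsPrincipal := by
  intro hr
  have : (q.map (Ideal.Quotient.mk p)).IsPrime := isPrime_map_quotientMk_of_isPrime hpq.le
  have hq₀ : q.map (Ideal.Quotient.mk p) ≠ ⊥ := by
    rw [Ne, map_eq_bot_iff_le_ker, mk_ker]; exact hpq.not_ge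
  have hlt : q.map (Ideal.Quotient.mk p) < r.map (Ideal.Quotient.mk p) := by
    refine lt_of_le_not_ge (map_mono hqr.le) fun h => hqr.not_ge ?_
    rw [← comap_map_mk hpq.le]
    exact map_le_iff_le_comap.mp h
  exact (isPrime_map_quotientMk_of_isPrime (hpq.trans hqr).le).ne_top
    (eq_top_of_lt_of_isPrincipal hq₀ hlt)

/-- If every prime ideal of `R` is a direct sum of cyclic modules, then `dim R ≤ 1`. -/
theorem krullDim_le_one_of_primes_directSumOfCyclics (R : Type) [CommRing R]
    (h : ∀ P : Ideal R, P.IsPrime → P.IsDirectSumOfCyclics) :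
    ringKrullDim R ≤ 1 := by
  refine Order.krullDim_le_one_iff.mpr fun q => ?_
  by_contra! hq
  obtain ⟨p, hpq⟩ := not_isMin_iff.mp hq.1
  obtain ⟨r, hqr⟩ := not_isMax_iff.mp hq.2
  have isPrincipal_map (s : PrimeSpectrum R) :
      (s.asIdeal.map (Ideal.Quotient.mk p.asIdeal)).IsPrincipal :=
    (h s.asIdeal s.isPrime).map_isPrincipal (Ideal.Quotient.mk p.asIdeal)
  exact map_quotientMk_not_isPrincipal_of_lt_of_lt hpq hqr (isPrincipal_map q) (isPrincipal_map r)
end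

section
/- Let (R, M) be a commutative local ring with maximal ideal M, and suppose M = Rx ⊕ Ry ⊕ Rz ⊕ K (internal direct sum of R-submodules) for nonzero elements x, y, z ∈ R and an ideal K of R, where none of Rx, Ry, Rz is a simple R-module. Then the ideal J = R(x+y) + R(x+z) is not a direct sum of cyclic R-modules. -/
open IsLocalRing Submodule

theorem iSupIndep.disjoint_sup_sup {ι α : Type*} [CompleteLattice α] {f : ι → α}
    (h : iSupIndep f) {i j k l : ι} (hj : j ≠ i) (hk : k ≠ i) (hl : l ≠ i) :
    Disjoint (f i) (f j ⊔ (f k ⊔ f l)) :=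
  (h i).mono_right <| sup_le (le_biSup f hj) <| sup_le (le_biSup f hk) (le_biSup f hl)

section CommRing

variable {R : Type*} [CommRing R]

theorem mul_eq_zero_of_disjoint_span_singleton {a b : R} {N : Ideal R}
    (h : Disjoint (R ∙ a) N) (hb : b ∈ N) : a * b = 0 :=
  disjoint_def.mp h _ (mem_span_singleton.mpr ⟨b, mul_comm b a⟩) (N.mul_mem_left a hb)

theorem subsingleton_setOf_isUnit_of_mul_eq {ι : Type*} {w c : ι → R} {t : R}
    (hind : Pairwise fun i j => Disjoint (R ∙ w i) (R ∙ w j))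
    (hw : ∀ i, t * w i = c i * (t * t)) (ht : t * t ≠ 0) : {i | IsUnit (c i)}.Subsingleton := by
  intro i hi j hj
  by_contra hij
  have h0 : c j * t * w i = 0 := disjoint_def.mp (hind hij) _
    (mem_span_singleton.mpr ⟨c j * t, rfl⟩)
    (mem_span_singleton.mpr ⟨c i * t, by linear_combination c i * hw j - c j * hw i⟩)
  exact ht ((hj.mul hi).mul_right_eq_zero.mp (by linear_combination h0 - c j * hw i))

theorem mul_finsuppSum_smul_eq {ι : Type*} {w c : ι → R} {t s : R}
    (hw : ∀ i, t * w i = c i * s) (a : ι →₀ R) :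
    t * (a.sum fun i r => r • w i) = (a.sum fun i r => r * c i) * s := by
  simp only [Finsupp.mul_sum, Finsupp.sum_mul, smul_eq_mul, mul_left_comm t, hw, mul_assoc]

end CommRing

section LocalRing

variable {R : Type*} [CommRing R] [IsLocalRing R]

theorem IsLocalRing.isUnit_add_of_isUnit_of_not_isUnit {a b : R} (ha : IsUnit a)
    (hb : ¬IsUnit b) : IsUnit (a + b) := by
  by_contra hab
  refine nonunits_add (a := a + b) (b := -b) hab (by simpa using hb) ?_
  simpa using ha

theorem IsLocalRing.isUnit_sum_of_isUnit_of_forall_ne {ι : Type*} {s : Finset ι} {f : ι → R}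
    {i : ι} (hi : i ∈ s) (hu : IsUnit (f i)) (h : ∀ j ∈ s, j ≠ i → ¬IsUnit (f j)) :
    IsUnit (∑ j ∈ s, f j) := by
  classical
  rw [← Finset.add_sum_erase s f hi]
  refine isUnit_add_of_isUnit_of_not_isUnit hu fun hsum => ?_
  obtain ⟨j, hj, hju⟩ := exists_of_isUnit_sum hsum
  exact h j (Finset.mem_of_mem_erase hj) (Finset.ne_of_mem_erase hj) hju

theorem IsLocalRing.isUnit_of_mul_eq_self {a s : R} (hs : s ≠ 0) (h : a * s = s) : IsUnit a := by
  refine isUnit_of_mem_nonunits_one_sub_self a fun hu => hs ?_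
  exact hu.mul_right_eq_zero.mp (by linear_combination -h)

theorem IsLocalRing.isSimpleModule_span_singleton_of_forall_smul_eq_zero {M : Type*}
    [AddCommGroup M] [Module R M] {x : M} (hx : x ≠ 0)
    (h : ∀ m ∈ maximalIdeal R, m • x = 0) : IsSimpleModule R (R ∙ x) := by
  have htorsion : Ideal.torsionOf R M x = maximalIdeal R :=
    ((maximalIdeal.isMaximal R).eq_of_le
      (mt (Ideal.torsionOf_eq_top_iff (R := R) x).mp hx) h).symm
  have : IsSimpleModule R (R ⧸ Ideal.torsionOf R M x) :=
    isSimpleModule_iff_isCoatom.mpr (htorsion ▸ (maximalIdeal.isMaximal R).out)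
  exact IsSimpleModule.congr (Ideal.quotTorsionOfEquivSpanSingleton R M x).symm

theorem mul_self_ne_zero_of_not_isSimpleModule {x : R} {N : Ideal R}
    (hx : x ≠ 0) (hdisj : Disjoint (R ∙ x) N) (hsup : (R ∙ x) ⊔ N = maximalIdeal R)
    (hs : ¬IsSimpleModule R (R ∙ x)) : x * x ≠ 0 := by
  refine fun hxx => hs (isSimpleModule_span_singleton_of_forall_smul_eq_zero hx fun m hm => ?_)
  obtain ⟨a, ha, n, hn, rfl⟩ := mem_sup.mp (hsup ▸ hm)
  obtain ⟨r, rfl⟩ := mem_span_singleton.mp ha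
  rw [smul_eq_mul, smul_eq_mul]
  linear_combination r * hxx + mul_eq_zero_of_disjoint_span_singleton hdisj hn

theorem IsLocalRing.not_isUnit_sum_mul_of_subsingleton {ι : Type*} {p q : ι → R}
    (hp : {i | IsUnit (p i)}.Subsingleton) (hq : {i | IsUnit (q i)}.Subsingleton)
    (hpq : {i | IsUnit (p i + q i)}.Subsingleton) {s t : Finset ι} {a b : ι → R}
    (hap : IsUnit (∑ i ∈ s, a i * p i)) (haq : ¬IsUnit (∑ i ∈ s, a i * q i)) :
    ¬IsUnit (∑ i ∈ t, b i * q i) := by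
  obtain ⟨i, hi, hapi⟩ := exists_of_isUnit_sum hap
  have hpi := isUnit_of_mul_isUnit_right hapi
  have hqi : ¬IsUnit (q i) := fun hqi => haq <|
    isUnit_sum_of_isUnit_of_forall_ne hi ((isUnit_of_mul_isUnit_left hapi).mul hqi)
      fun j _ hji hqj => hji (hq (isUnit_of_mul_isUnit_right hqj) hqi)
  intro hbq
  obtain ⟨j, -, hbqj⟩ := exists_of_isUnit_sum hbq
  have hqj := isUnit_of_mul_isUnit_right hbqj
  have hij : i ≠ j := fun h => hqi (h ▸ hqj)
  have hpj : ¬IsUnit (p j) := fun hpj => hij (hp hpi hpj)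
  exact hij (hpq (isUnit_add_of_isUnit_of_not_isUnit hpi hqi)
    (by rw [Set.mem_ofPred_eq, add_comm]; exact isUnit_add_of_isUnit_of_not_isUnit hqj hpj))

end LocalRing

theorem not_isDirectSumOfCyclics_span_pair {R : Type} [CommRing R] [IsLocalRing R] {x y z : R}
    (hxy : x * y = 0) (hxz : x * z = 0) (hyz : y * z = 0)
    (hx : x * x ≠ 0) (hy : y * y ≠ 0) (hz : z * z ≠ 0) :
    ¬(Ideal.span ({x + y, x + z} : Set R)).IsDirectSumOfCyclics := by
  rintro ⟨ι, w, hind, hsup⟩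
  have hspan : span R (Set.range w) = Ideal.span {x + y, x + z} := by
    rw [span_range_eq_iSup, hsup]
  have hcoeff : ∀ i, ∃ p q, p * (x + y) + q * (x + z) = w i := fun i =>
    Ideal.mem_span_pair.mp (hspan ▸ subset_span (Set.mem_range_self i))
  choose p q hw using hcoeff
  have hxw : ∀ i, x * w i = (p i + q i) * (x * x) := fun i => by
    rw [← hw]; linear_combination p i * hxy + q i * hxz
  have hyw : ∀ i, y * w i = p i * (y * y) := fun i => by
    rw [← hw]; linear_combination p i * hxy + q i * (hxy + hyz)
  have hzw : ∀ i, z * w i = q i * (z * z) := fun i => by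
    rw [← hw]; linear_combination p i * (hxz + hyz) + q i * hxz
  have hmem : ∀ v ∈ ({x + y, x + z} : Set R),
      ∃ a : ι →₀ R, (a.sum fun i r => r • w i) = v :=
    fun v hv => Finsupp.mem_span_range_iff_exists_finsupp.mp (hspan ▸ Ideal.subset_span hv)
  obtain ⟨a, ha⟩ := hmem (x + y) (by simp)
  obtain ⟨b, hb⟩ := hmem (x + z) (by simp)
  refine not_isUnit_sum_mul_of_subsingleton (s := a.support) (a := a) (t := b.support) (b := b)
    (subsingleton_setOf_isUnit_of_mul_eq hind.pairwiseDisjoint hyw hy)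
    (subsingleton_setOf_isUnit_of_mul_eq hind.pairwiseDisjoint hzw hz)
    (subsingleton_setOf_isUnit_of_mul_eq hind.pairwiseDisjoint hxw hx)
    (isUnit_of_mul_eq_self hy ?_) (fun hu => hz (hu.mul_right_eq_zero.mp ?_))
    (isUnit_of_mul_eq_self hz ?_)
  · refine (mul_finsuppSum_smul_eq hyw a).symm.trans ?_
    rw [ha]; linear_combination hxy
  · refine (mul_finsuppSum_smul_eq hzw a).symm.trans ?_
    rw [ha]; linear_combination hxz + hyz
  · refine (mul_finsuppSum_smul_eq hzw b).symm.trans ?_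
    rw [hb]; linear_combination hxz

/-- If `M = Rx ⊕ Ry ⊕ Rz ⊕ K` with none of `Rx`, `Ry`, `Rz` simple, then
`J = R(x+y) + R(x+z)` is not a direct sum of cyclic modules. -/
theorem not_directSumOfCyclics (R : Type) [CommRing R] [IsLocalRing R]
    (x y z : R) (hx : x ≠ 0) (hy : y ≠ 0) (hz : z ≠ 0) (K : Ideal R)
    (hindep : iSupIndep
      ![Submodule.span R ({x} : Set R), Submodule.span R ({y} : Set R),
        Submodule.span R ({z} : Set R), K])
    (hsum : Submodule.span R ({x} : Set R) ⊔ Submodule.span R ({y} : Set R) ⊔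
      Submodule.span R ({z} : Set R) ⊔ K = IsLocalRing.maximalIdeal R)
    (hxs : ¬ IsSimpleModule R (Submodule.span R ({x} : Set R)))
    (hys : ¬ IsSimpleModule R (Submodule.span R ({y} : Set R)))
    (hzs : ¬ IsSimpleModule R (Submodule.span R ({z} : Set R))) :
    ¬ (Ideal.span ({x + y, x + z} : Set R)).IsDirectSumOfCyclics := by
  have hdx : Disjoint (R ∙ x) ((R ∙ y) ⊔ ((R ∙ z) ⊔ K)) :=
    hindep.disjoint_sup_sup (i := 0) (j := 1) (k := 2) (l := 3)
      (by decide) (by decide) (by decide)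
  have hdy : Disjoint (R ∙ y) ((R ∙ x) ⊔ ((R ∙ z) ⊔ K)) :=
    hindep.disjoint_sup_sup (i := 1) (j := 0) (k := 2) (l := 3)
      (by decide) (by decide) (by decide)
  have hdz : Disjoint (R ∙ z) ((R ∙ x) ⊔ ((R ∙ y) ⊔ K)) :=
    hindep.disjoint_sup_sup (i := 2) (j := 0) (k := 1) (l := 3)
      (by decide) (by decide) (by decide)
  exact not_isDirectSumOfCyclics_span_pair
    (mul_eq_zero_of_disjoint_span_singleton hdx (mem_sup_left (mem_span_singleton_self y)))
    (mul_eq_zero_of_disjoint_span_singleton hdx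
      (mem_sup_right (mem_sup_left (mem_span_singleton_self z))))
    (mul_eq_zero_of_disjoint_span_singleton hdy
      (mem_sup_right (mem_sup_left (mem_span_singleton_self z))))
    (mul_self_ne_zero_of_not_isSimpleModule hx hdx (by rw [← hsum]; ac_rfl) hxs)
    (mul_self_ne_zero_of_not_isSimpleModule hy hdy (by rw [← hsum]; ac_rfl) hys)
    (mul_self_ne_zero_of_not_isSimpleModule hz hdz (by rw [← hsum]; ac_rfl) hzs)
end

section
/- A commutative ring R is local if and only if whenever ⊕_{i=1}^n Rx_i ≅ ⊕_{j=1}^m Ry_j as R-modules, where each Rx_i and Ry_j is a nonzero cyclic R-module, it follows that n = m. -/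
/-!
Over a local ring with residue field `k`, every proper ideal `I` lies in the maximal ideal, so
`(R ⧸ I) ⊗[R] k ≅ k`; hence tensoring with `k` turns a sum of `n` nonzero cyclic modules into
`kⁿ`, and `n` is recovered as a `k`-dimension. Conversely, two distinct maximal ideals `𝔪, 𝔫`
give, by the Chinese remainder theorem, `R ⧸ (𝔪 ⊓ 𝔫) ≅ R ⧸ 𝔪 ⊕ R ⧸ 𝔫`: one summand against two.
-/

open DirectSum TensorProduct IsLocalRing

noncomputable def TensorProduct.quotTensorEquivOfSMulTopEqBot {R M : Type*} [CommRing R]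
    [AddCommGroup M] [Module R M] {I : Ideal R} (h : I • (⊤ : Submodule R M) = ⊥) :
    (R ⧸ I) ⊗[R] M ≃ₗ[R] M :=
  quotTensorEquivQuotSMul M I ≪≫ₗ Submodule.quotEquivOfEqBot _ h

namespace IsLocalRing

variable {R : Type*} [CommRing R] [IsLocalRing R]

theorem smul_top_residueField_eq_bot {I : Ideal R} (hI : I ≠ ⊤) :
    I • (⊤ : Submodule R (ResidueField R)) = ⊥ := by
  refine eq_bot_iff.mpr (Submodule.smul_le.mpr fun r hr x _ => ?_)
  rw [Submodule.mem_bot, Algebra.smul_def, ResidueField.algebraMap_eq,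
    (residue_eq_zero_iff r).mpr (le_maximalIdeal hI hr), zero_mul]

noncomputable def directSumQuotientTensorResidueFieldEquiv {ι : Type*} [Fintype ι]
    [DecidableEq ι] {I : ι → Ideal R} (hI : ∀ i, I i ≠ ⊤) :
    (⨁ i, R ⧸ I i) ⊗[R] ResidueField R ≃ₗ[R] (ι → ResidueField R) :=
  directSumLeft R R _ _ ≪≫ₗ
    DFinsupp.mapRange.linearEquiv (fun i =>
      quotTensorEquivOfSMulTopEqBot (smul_top_residueField_eq_bot (hI i))) ≪≫ₗ
    linearEquivFunOnFintype R ι _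

theorem card_eq_of_directSum_quotient_linearEquiv {ι κ : Type*} [Fintype ι] [DecidableEq ι]
    [Fintype κ] [DecidableEq κ] {I : ι → Ideal R} {J : κ → Ideal R} (hI : ∀ i, I i ≠ ⊤)
    (hJ : ∀ j, J j ≠ ⊤) (e : (⨁ i, R ⧸ I i) ≃ₗ[R] ⨁ j, R ⧸ J j) :
    Fintype.card ι = Fintype.card κ := by
  let f : (ι → ResidueField R) ≃ₗ[R] (κ → ResidueField R) :=
    (directSumQuotientTensorResidueFieldEquiv hI).symm ≪≫ₗ e.rTensor _ ≪≫ₗ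
      directSumQuotientTensorResidueFieldEquiv hJ
  simpa using (f.extendScalarsOfSurjective residue_surjective).finrank_eq

end IsLocalRing

namespace Ideal

variable {R : Type*} [CommRing R]

noncomputable def quotientInfLinearEquivQuotientProd (I J : Ideal R) (coprime : IsCoprime I J) :
    (R ⧸ I ⊓ J) ≃ₗ[R] (R ⧸ I) × R ⧸ J :=
  (AlgEquiv.ofRingEquiv (f := I.quotientInfEquivQuotientProd J coprime) fun _ => rfl).toLinearEquiv

noncomputable def directSumQuotientInfLinearEquiv (I J : Ideal R) (coprime : IsCoprime I J) :
    (⨁ _ : Fin 1, R ⧸ I ⊓ J) ≃ₗ[R] ⨁ j : Fin 2, R ⧸ ![I, J] j :=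
  linearEquivFunOnFintype R _ _ ≪≫ₗ LinearEquiv.funUnique _ R _ ≪≫ₗ
    I.quotientInfLinearEquivQuotientProd J coprime ≪≫ₗ
    (LinearEquiv.piFinTwo R fun j => R ⧸ ![I, J] j).symm ≪≫ₗ
    (linearEquivFunOnFintype R _ _).symm

end Ideal

/-- A (nonzero) commutative ring is local iff finite direct sums of nonzero cyclic modules
have a well-defined number of summands. -/
theorem isLocalRing_iff_invariant_number_of_cyclic_summands (R : Type) [CommRing R]
    [Nontrivial R] :
    IsLocalRing R ↔
      ∀ (n m : ℕ) (I : Fin n → Ideal R) (J : Fin m → Ideal R),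
        (∀ i, I i ≠ ⊤) → (∀ j, J j ≠ ⊤) →
        Nonempty ((⨁ i, R ⧸ I i) ≃ₗ[R] ⨁ j, R ⧸ J j) → n = m := by
  refine ⟨fun _ n m I J hI hJ ⟨e⟩ => ?_, fun h => ?_⟩
  · simpa using card_eq_of_directSum_quotient_linearEquiv hI hJ e
  · by_contra hR
    obtain ⟨M, N, hM, hN, hMN⟩ := (not_isLocalRing_tfae.out 0 2).mp hR
    have := h 1 2 (fun _ => M ⊓ N) ![M, N] (fun _ => ne_top_of_le_ne_top hM.ne_top inf_le_left)
      (Fin.forall_fin_two.mpr ⟨hM.ne_top, hN.ne_top⟩)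
      ⟨M.directSumQuotientInfLinearEquiv N (Ideal.isCoprime_of_isMaximal hMN)⟩
    omega
end

section
/- Let R be a commutative local ring and whenever ⊕_{i∈I} Rx_i ≅ ⊕_{j∈J} Ry_j as R-modules with all Rx_i, Ry_j nonzero cyclic R-modules, then |I| = |J|. -/
/-!
Tensoring with the residue field `k` of `R` turns a cyclic module `R ⧸ I` with `I ≠ ⊤` into `k`,
because `I ⊆ 𝔪` dies in `k`. As the tensor product commutes with direct sums, an isomorphism
`⨁ i, R ⧸ I i ≃ ⨁ j, R ⧸ J j` becomes an isomorphism of `k`-vector spaces of dimensions `#ι`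
and `#κ`, and dimension is an invariant.
-/

open DirectSum TensorProduct IsLocalRing Cardinal

section

variable {R : Type*} [CommRing R] [IsLocalRing R]

theorem IsLocalRing.map_algebraMap_residueField_eq_bot {I : Ideal R} (hI : I ≠ ⊤) :
    I.map (algebraMap R (ResidueField R)) = ⊥ :=
  (Ideal.map_eq_bot_iff_le_ker _).mpr (ker_residue (R := R) ▸ le_maximalIdeal hI)

theorem rank_residueField_tensor_quotient {I : Ideal R} (hI : I ≠ ⊤) :
    Module.rank (ResidueField R) (ResidueField R ⊗[R] (R ⧸ I)) = 1 := by
  rw [← (Algebra.TensorProduct.quotIdealMapEquivTensorQuot (ResidueField R) I).toLinearEquiv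
      |>.rank_eq, map_algebraMap_residueField_eq_bot hI,
    (Submodule.quotEquivOfEqBot ⊥ rfl).rank_eq, Module.rank_self]

theorem rank_residueField_tensor_directSum_quotient {ι : Type*} (I : ι → Ideal R)
    (hI : ∀ i, I i ≠ ⊤) :
    Module.rank (ResidueField R) (ResidueField R ⊗[R] ⨁ i, R ⧸ I i) = lift #ι := by
  classical
  rw [(directSumRight R (ResidueField R) (ResidueField R) _).rank_eq, rank_directSum]
  simp [rank_residueField_tensor_quotient, hI]

end

/-- Over a commutative local ring, two direct sums of nonzero cyclic modules that are
isomorphic have index sets of the same cardinality. -/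
theorem card_eq_of_directSum_cyclics_iso (R : Type) [CommRing R] [IsLocalRing R]
    (ι κ : Type) (I : ι → Ideal R) (J : κ → Ideal R)
    (hI : ∀ i, I i ≠ ⊤) (hJ : ∀ j, J j ≠ ⊤)
    (hiso : Nonempty ((⨁ i, R ⧸ I i) ≃ₗ[R] ⨁ j, R ⧸ J j)) :
    Cardinal.mk ι = Cardinal.mk κ := by
  obtain ⟨e⟩ := hiso
  have h := (e.baseChange R (ResidueField R)).rank_eq
  rw [rank_residueField_tensor_directSum_quotient I hI,
    rank_residueField_tensor_directSum_quotient J hJ] at h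
  exact lift_inj.mp h
end

section
/- Let (R, M) be a commutative local ring such that every ideal of R is a direct sum of cyclic R-modules. Then Spec(R) has at most 3 elements. -/
/-!
Write `M = ⊕ R xᵢ`. Since `xᵢ xⱼ = 0` for `i ≠ j`, every non-maximal prime `P` omits exactly
one generator `xᵢ`. Two primes omitting the same generator coincide: decomposing `P + Q` shows
`P ⊆ Q + Rp` for a single `p ∈ P`, and writing `p = c xᵢ + n` with `n ∈ P ∩ Q` forces `p ∈ Q`.
Three primes omitting distinct generators `x₁, x₂, x₃` cannot exist: the generators `z` of
`(x₁ + x₂, x₂ + x₃)` have coordinates `(s, s + w, w)` along `x₁, x₂, x₃`, whose residues are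
vectors of `k³` with pairwise disjoint supports spanning the plane `{(a, a + c, c)}`; but that
plane contains no nonzero vector supported on a single coordinate.
-/

open Submodule IsLocalRing

theorem sum_mul_ne_zero_of_pairwise_mul_eq_zero {K ι : Type*} [CommRing K] [IsDomain K]
    {a c : ι → K} (ha : Pairwise fun t t' => a t * a t' = 0)
    (hc : Pairwise fun t t' => c t * c t' = 0)
    (hac : Pairwise fun t t' => (a t + c t) * (a t' + c t') = 0)
    {σ : ι} (hσ : c σ ≠ 0) {S : Finset ι} {l : ι → K} (hl : ∑ t ∈ S, l t * a t = 1) :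
    ∑ t ∈ S, l t * c t ≠ 0 := by
  obtain ⟨τ, hτS, hτ⟩ := Finset.exists_ne_zero_of_sum_ne_zero (hl ▸ one_ne_zero)
  have haτ : a τ ≠ 0 := right_ne_zero_of_mul hτ
  rcases eq_or_ne τ σ with rfl | hτσ
  · rw [Finset.sum_eq_single_of_mem τ hτS fun t _ ht => by
      rw [(mul_eq_zero.mp (hc ht)).resolve_right hσ, mul_zero]]
    exact mul_ne_zero (left_ne_zero_of_mul hτ) hσ
  · have haσ : a σ = 0 := (mul_eq_zero.mp (ha hτσ)).resolve_left haτ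
    have hcτ : c τ = 0 := (mul_eq_zero.mp (hc hτσ)).resolve_right hσ
    have hacτσ : (a τ + c τ) * (a σ + c σ) = 0 := hac hτσ
    rw [haσ, hcτ, add_zero, zero_add] at hacτσ
    exact absurd hacτσ (mul_ne_zero haτ hσ)

theorem Set.exists_subset_pair_of_forall_three {α : Type*} [Nonempty α] {s : Set α}
    (h : ∀ a ∈ s, ∀ b ∈ s, ∀ c ∈ s, a = b ∨ a = c ∨ b = c) : ∃ a b, s ⊆ {a, b} := by
  by_cases hpair : ∃ a ∈ s, ∃ b ∈ s, a ≠ b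
  · obtain ⟨a, ha, b, hb, hab⟩ := hpair
    exact ⟨a, b, fun c hc => ((h a ha b hb c hc).resolve_left hab).imp Eq.symm Eq.symm⟩
  · push Not at hpair
    obtain ⟨a⟩ := ‹Nonempty α›
    by_cases hs : s.Nonempty
    · obtain ⟨b, hb⟩ := hs
      exact ⟨b, b, fun c hc => Or.inl (hpair c hc b hb)⟩
    · exact ⟨a, a, by simp [Set.not_nonempty_iff_eq_empty.mp hs]⟩

section CommRing

variable {R : Type} [CommRing R]

theorem mul_eq_zero_of_iSupIndep {ι : Type} {x : ι → R}
    (hind : iSupIndep fun i => Submodule.span R ({x i} : Set R)) {i j : ι} (hij : i ≠ j) :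
    x i * x j = 0 := by
  refine disjoint_def.mp (hind i) _ (mem_span_singleton.mpr ⟨x j, mul_comm _ _⟩) ?_
  exact mem_iSup_of_mem j (mem_iSup_of_mem hij.symm (mem_span_singleton.mpr ⟨x i, rfl⟩))

theorem Ideal.IsPrime.mem_of_iSupIndep {ι : Type} {x : ι → R} {P : Ideal R} (hP : P.IsPrime)
    (hind : iSupIndep fun i => Submodule.span R ({x i} : Set R)) {i j : ι} (hi : x i ∉ P)
    (hji : j ≠ i) : x j ∈ P :=
  (hP.mem_or_mem (mul_eq_zero_of_iSupIndep hind hji ▸ P.zero_mem)).resolve_right hi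

theorem Ideal.IsDirectSumOfCyclics.exists_le_sup_span_singleton {I P : Ideal R}
    (hI : I.IsDirectSumOfCyclics) (hP : P.IsPrime) : ∃ z ∈ I, I ≤ P ⊔ Ideal.span {z} := by
  obtain ⟨ι, x, hind, rfl⟩ := hI
  by_cases hall : ∀ i, x i ∈ P
  · exact ⟨0, zero_mem _, iSup_le fun i => (Ideal.span_singleton_le_iff_mem _).mpr
      (mem_sup_left (hall i))⟩
  push Not at hall
  obtain ⟨i, hi⟩ := hall
  refine ⟨x i, mem_iSup_of_mem i (mem_span_singleton_self _), iSup_le fun j => ?_⟩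
  rcases eq_or_ne j i with rfl | hji
  · exact le_sup_right
  · exact (Ideal.span_singleton_le_iff_mem _).mpr (mem_sup_left (hP.mem_of_iSupIndep hind hi hji))

theorem Finsupp.sum_smul_mul_of_mul_eq {ι : Type*} (l : ι →₀ R) {z f : ι → R} {x y : R}
    (hf : ∀ t, z t * x = f t * y) :
    (l.sum fun t a => a • z t) * x = (l.sum fun t a => a * f t) * y := by
  simp only [Finsupp.sum, Finset.sum_mul, smul_eq_mul, mul_assoc, hf]

end CommRing

section IsLocalRing

variable {R : Type} [CommRing R] [IsLocalRing R]

theorem exists_notMem_of_iSup_eq_maximalIdeal {ι : Type} {x : ι → R}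
    (hsup : ⨆ i, Submodule.span R ({x i} : Set R) = maximalIdeal R) {P : Ideal R}
    (hP : P.IsPrime) (hPM : P ≠ maximalIdeal R) : ∃ i, x i ∉ P := by
  by_contra! hall
  exact hPM <| le_antisymm (le_maximalIdeal hP.ne_top) <| hsup ▸
    iSup_le fun i => (Ideal.span_singleton_le_iff_mem _).mpr (hall i)

theorem residue_eq_of_mul_pow_eq {P : Ideal R} [hP : P.IsPrime] {x a b : R} (hx : x ∉ P)
    {n : ℕ} (h : a * x ^ n = b * x ^ n) : residue R a = residue R b := by
  have hab : (a - b) * x ^ n ∈ P := by rw [sub_mul, h, sub_self]; exact P.zero_mem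
  have := le_maximalIdeal hP.ne_top
    ((hP.mem_or_mem hab).resolve_right fun hxn => hx (hP.mem_of_pow_mem n hxn))
  rwa [← residue_eq_zero_iff, map_sub, sub_eq_zero] at this

theorem le_of_isDirectSumOfCyclics_sup {P Q : Ideal R} (hP : P.IsPrime) (hQ : Q.IsPrime)
    (hPQ : (P ⊔ Q).IsDirectSumOfCyclics) {x : R} (hx : x ∈ maximalIdeal R) (hxP : x ∉ P)
    (hPx : P ≤ P ⊓ Q ⊔ Ideal.span {x}) : P ≤ Q := by
  obtain ⟨z, hz, hle⟩ := hPQ.exists_le_sup_span_singleton hQ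
  obtain ⟨p, hp, q, hq, rfl⟩ := mem_sup.mp hz
  have hPp : P ≤ Q ⊔ Ideal.span {p} := le_sup_left.trans <| hle.trans <| sup_le le_sup_left <|
    (Ideal.span_singleton_le_iff_mem _).mpr <| add_comm p q ▸
      add_mem (mem_sup_left hq) (mem_sup_right (mem_span_singleton_self p))
  suffices hpQ : p ∈ Q by
    rwa [sup_eq_left.mpr ((Ideal.span_singleton_le_iff_mem _).mpr hpQ)] at hPp
  obtain ⟨n, ⟨hnP, hnQ⟩, _, hxc, hpn⟩ := mem_sup.mp (hPx hp)
  obtain ⟨c, rfl⟩ := Ideal.mem_span_singleton'.mp hxc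
  have hcx : c * x ∈ P := by
    rw [← add_sub_cancel_left n (c * x), hpn]
    exact sub_mem hp hnP
  have hc : c ∈ P := (hP.mem_or_mem hcx).resolve_right hxP
  obtain ⟨q', hq', _, hrp, hcq⟩ := mem_sup.mp (hPp hc)
  obtain ⟨r, rfl⟩ := Ideal.mem_span_singleton'.mp hrp
  have hunit : IsUnit (1 - r * x) := isUnit_one_sub_self_of_mem_nonunits _
    (Ideal.mul_mem_left _ r hx)
  have hmem : p * (1 - r * x) ∈ Q := by
    rw [show p * (1 - r * x) = n + q' * x by linear_combination -hpn - x * hcq]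
    exact add_mem hnQ (Q.mul_mem_right x hq')
  exact (hQ.mem_or_mem hmem).resolve_right fun h => hQ.ne_top (Q.eq_top_of_isUnit_mem h hunit)

theorem pairwise_residue_mul_eq_zero {ι : Type} {z : ι → R}
    (hind : iSupIndep fun i => Submodule.span R ({z i} : Set R)) {P : Ideal R} [P.IsPrime]
    {x : R} (hx : x ∉ P) {f : ι → R} (hf : ∀ t, z t * x = f t * x ^ 2) :
    Pairwise fun t t' => residue R (f t) * residue R (f t') = 0 := by
  intro t t' htt'
  rw [← map_mul, ← map_zero (residue R)]
  refine residue_eq_of_mul_pow_eq hx (n := 4) ?_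
  linear_combination x ^ 2 * mul_eq_zero_of_iSupIndep hind htt' - (z t' * x) * hf t
    - (f t * x ^ 2) * hf t'

theorem eq_of_generator_notMem (h : ∀ I : Ideal R, I.IsDirectSumOfCyclics) {ι : Type}
    {x : ι → R} (hind : iSupIndep fun i => Submodule.span R ({x i} : Set R))
    (hsup : ⨆ i, Submodule.span R ({x i} : Set R) = maximalIdeal R) {P Q : Ideal R}
    (hP : P.IsPrime) (hQ : Q.IsPrime) {i : ι} (hiP : x i ∉ P) (hiQ : x i ∉ Q) : P = Q := by
  have hle : ∀ {P Q : Ideal R}, P.IsPrime → Q.IsPrime → x i ∉ P → x i ∉ Q → P ≤ Q := by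
    intro P Q hP hQ hiP hiQ
    refine le_of_isDirectSumOfCyclics_sup hP hQ (h _)
      (hsup ▸ mem_iSup_of_mem i (mem_span_singleton_self _)) hiP ?_
    calc P ≤ maximalIdeal R := le_maximalIdeal hP.ne_top
      _ = ⨆ j, Submodule.span R ({x j} : Set R) := hsup.symm
      _ ≤ P ⊓ Q ⊔ Ideal.span {x i} := iSup_le fun j => ?_
    rcases eq_or_ne j i with rfl | hji
    · exact le_sup_right
    · exact (Ideal.span_singleton_le_iff_mem _).mpr <| mem_sup_left
        ⟨hP.mem_of_iSupIndep hind hiP hji, hQ.mem_of_iSupIndep hind hiQ hji⟩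
  exact le_antisymm (hle hP hQ hiP hiQ) (hle hQ hP hiQ hiP)

theorem not_isDirectSumOfCyclics_span_pair_s7 {x₁ x₂ x₃ : R} (h₁₂ : x₁ * x₂ = 0)
    (h₁₃ : x₁ * x₃ = 0) (h₂₃ : x₂ * x₃ = 0) {P₁ P₂ P₃ : Ideal R} [P₁.IsPrime] [P₂.IsPrime]
    [P₃.IsPrime] (hx₁ : x₁ ∉ P₁) (hx₂ : x₂ ∉ P₂) (hx₃ : x₃ ∉ P₃) :
    ¬ (Ideal.span {x₁ + x₂, x₂ + x₃}).IsDirectSumOfCyclics := by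
  rintro ⟨ι, z, hind, hJ⟩
  have hz : ∀ t, ∃ s w, s * (x₁ + x₂) + w * (x₂ + x₃) = z t := fun t =>
    Ideal.mem_span_pair.mp (hJ ▸ mem_iSup_of_mem t (mem_span_singleton_self _))
  choose s w hz using hz
  have hz₁ : ∀ t, z t * x₁ = s t * x₁ ^ 2 := fun t => by
    rw [← hz]; linear_combination (s t + w t) * h₁₂ + w t * h₁₃
  have hz₂ : ∀ t, z t * x₂ = (s t + w t) * x₂ ^ 2 := fun t => by
    rw [← hz]; linear_combination s t * h₁₂ + w t * h₂₃
  have hz₃ : ∀ t, z t * x₃ = w t * x₃ ^ 2 := fun t => by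
    rw [← hz]; linear_combination s t * h₁₃ + (s t + w t) * h₂₃
  have hmem : ∀ y ∈ Ideal.span {x₁ + x₂, x₂ + x₃},
      ∃ l : ι →₀ R, (l.sum fun t a => a • z t) = y := by
    intro y hy
    rw [← hJ, ← span_range_eq_iSup] at hy
    exact Finsupp.mem_span_range_iff_exists_finsupp.mp hy
  obtain ⟨l, hl⟩ := hmem _ (Ideal.subset_span (Set.mem_insert _ _))
  obtain ⟨m, hm⟩ := hmem _ (Ideal.subset_span (Set.mem_insert_of_mem _ rfl))
  have hl₁ : residue R (l.sum fun t a => a * s t) = residue R 1 :=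
    residue_eq_of_mul_pow_eq hx₁ <| by
      rw [← Finsupp.sum_smul_mul_of_mul_eq l hz₁, hl]; linear_combination h₁₂
  have hl₃ : residue R (l.sum fun t a => a * w t) = residue R 0 :=
    residue_eq_of_mul_pow_eq hx₃ <| by
      rw [← Finsupp.sum_smul_mul_of_mul_eq l hz₃, hl]; linear_combination h₁₃ + h₂₃
  have hm₃ : residue R (m.sum fun t a => a * w t) = residue R 1 :=
    residue_eq_of_mul_pow_eq hx₃ <| by
      rw [← Finsupp.sum_smul_mul_of_mul_eq m hz₃, hm]; linear_combination h₂₃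
  obtain ⟨σ, hσ⟩ : ∃ σ, residue R (w σ) ≠ 0 := by
    by_contra! hw
    simp [Finsupp.sum, hw] at hm₃
  refine sum_mul_ne_zero_of_pairwise_mul_eq_zero (pairwise_residue_mul_eq_zero hind hx₁ hz₁)
    (pairwise_residue_mul_eq_zero hind hx₃ hz₃) ?_ hσ
    (S := l.support) (l := fun t => residue R (l t)) ?_ ?_
  · simpa only [map_add] using pairwise_residue_mul_eq_zero hind hx₂ hz₂
  · simpa [Finsupp.sum] using hl₁
  · simpa [Finsupp.sum] using hl₃

theorem eq_or_eq_or_eq_of_ne_maximalIdeal (h : ∀ I : Ideal R, I.IsDirectSumOfCyclics)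
    {P Q L : Ideal R} (hP : P.IsPrime) (hPM : P ≠ maximalIdeal R) (hQ : Q.IsPrime)
    (hQM : Q ≠ maximalIdeal R) (hL : L.IsPrime) (hLM : L ≠ maximalIdeal R) :
    P = Q ∨ P = L ∨ Q = L := by
  obtain ⟨ι, x, hind, hsup⟩ := h (maximalIdeal R)
  obtain ⟨i, hi⟩ := exists_notMem_of_iSup_eq_maximalIdeal hsup hP hPM
  obtain ⟨j, hj⟩ := exists_notMem_of_iSup_eq_maximalIdeal hsup hQ hQM
  obtain ⟨k, hk⟩ := exists_notMem_of_iSup_eq_maximalIdeal hsup hL hLM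
  by_contra! hne
  have hij : i ≠ j := by
    rintro rfl; exact hne.1 (eq_of_generator_notMem h hind hsup hP hQ hi hj)
  have hik : i ≠ k := by
    rintro rfl; exact hne.2.1 (eq_of_generator_notMem h hind hsup hP hL hi hk)
  have hjk : j ≠ k := by
    rintro rfl; exact hne.2.2 (eq_of_generator_notMem h hind hsup hQ hL hj hk)
  exact not_isDirectSumOfCyclics_span_pair_s7 (mul_eq_zero_of_iSupIndep hind hij)
    (mul_eq_zero_of_iSupIndep hind hik) (mul_eq_zero_of_iSupIndep hind hjk) hi hj hk (h _)

end IsLocalRing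

/-- If every ideal of a local ring is a direct sum of cyclic modules, then `Spec R`
has at most three elements. -/
theorem spec_card_le_three (R : Type) [CommRing R] [IsLocalRing R]
    (h : ∀ I : Ideal R, I.IsDirectSumOfCyclics) :
    ∃ P₁ P₂ P₃ : Ideal R, ∀ P : Ideal R, P.IsPrime → P = P₁ ∨ P = P₂ ∨ P = P₃ := by
  obtain ⟨P₁, P₂, hsub⟩ : ∃ P₁ P₂, {P : Ideal R | P.IsPrime ∧ P ≠ maximalIdeal R} ⊆ {P₁, P₂} :=
    Set.exists_subset_pair_of_forall_three fun _ ⟨hP, hPM⟩ _ ⟨hQ, hQM⟩ _ ⟨hL, hLM⟩ =>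
      eq_or_eq_or_eq_of_ne_maximalIdeal h hP hPM hQ hQM hL hLM
  refine ⟨P₁, P₂, maximalIdeal R, fun P hP => ?_⟩
  by_cases hPM : P = maximalIdeal R
  · exact Or.inr (Or.inr hPM)
  · exact Or.imp_right Or.inl (hsub ⟨hP, hPM⟩)
end

section
/- Let (R, M) be a commutative local ring such that every ideal of R is a direct sum of cyclic R-modules. If the maximal ideal M = Rz is principal with z not nilpotent, then R is a principal ideal domain and Spec(R) = {(0), M}. -/
/-!
Let `J = ⋂ₙ zⁿR`. Since `z` is not nilpotent, the annihilator of `z` lies in `J`, and from this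
one gets `J = zJ`. For a direct sum of cyclic modules `⨁ Rxᵢ` this forces every `xᵢ` into
`z Rxᵢ`, so `xᵢ = 0` by Nakayama's trick; hence `J = 0`. Every nonzero element then lies in
some `zⁿR \ zⁿ⁺¹R`, i.e. is a unit times `zⁿ`, which makes `R` a discrete valuation ring.
-/

theorem Submodule.exists_mem_smul_eq_of_iSupIndep {R M ι : Type*} [CommRing R] [AddCommGroup M]
    [Module R M] {N : ι → Submodule R M} (hN : iSupIndep N) {i : ι} {x : M} (hx : x ∈ N i)
    (r : R) {c : M} (hc : c ∈ ⨆ j, N j) (hxc : x = r • c) : ∃ d ∈ N i, x = r • d := by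
  rw [iSup_split_single N i] at hc
  obtain ⟨d, hd, d', hd', rfl⟩ := Submodule.mem_sup.mp hc
  have hd'_mem : r • d' ∈ N i := by
    simpa [hxc, smul_add] using Submodule.sub_mem _ hx (Submodule.smul_mem _ r hd)
  have hd'_zero : r • d' = 0 :=
    Submodule.disjoint_def.mp (hN i) _ hd'_mem (Submodule.smul_mem _ r hd')
  exact ⟨d, hd, by rw [hxc, smul_add, hd'_zero, add_zero]⟩

theorem Ideal.IsDirectSumOfCyclics.eq_bot_of_le_span_mul {R : Type} [CommRing R] {I : Ideal R}
    (hI : I.IsDirectSumOfCyclics) {z : R} (hz : z ∈ Ideal.jacobson ⊥)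
    (hIz : I ≤ Ideal.span {z} * I) : I = ⊥ := by
  obtain ⟨ι, x, hind, rfl⟩ := hI
  suffices hx : ∀ i, x i = 0 by simp [hx]
  intro i
  have hxI : x i ∈ ⨆ j, Submodule.span R {x j} :=
    Submodule.mem_iSup_of_mem i (Submodule.mem_span_singleton_self _)
  obtain ⟨c, hc, hzc⟩ := Ideal.mem_span_singleton_mul.mp (hIz hxI)
  obtain ⟨d, hd, hxd⟩ := Submodule.exists_mem_smul_eq_of_iSupIndep hind
    (Submodule.mem_span_singleton_self _) z hc hzc.symm
  obtain ⟨r, rfl⟩ := Submodule.mem_span_singleton.mp hd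
  have hunit : IsUnit (z * -r + 1) := Ideal.mem_jacobson_bot.mp hz (-r)
  have hzero : (z * -r + 1) * x i = 0 := by
    rw [smul_eq_mul, smul_eq_mul] at hxd
    linear_combination hxd
  exact (hunit.mul_right_eq_zero).mp hzero

namespace IsLocalRing

variable {R : Type*} [CommRing R] [IsLocalRing R] {z : R}

theorem associated_pow_of_mem_span_pow_of_notMem
    (hz : maximalIdeal R = Ideal.span {z}) {a : R} {n : ℕ}
    (ha : a ∈ Ideal.span {z ^ n}) (ha' : a ∉ Ideal.span {z ^ (n + 1)}) :
    Associated (z ^ n) a := by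
  obtain ⟨c, rfl⟩ := Ideal.mem_span_singleton.mp ha
  have hc : IsUnit c := by
    by_contra hc
    obtain ⟨d, rfl⟩ := Ideal.mem_span_singleton.mp (hz ▸ (mem_maximalIdeal c).mpr hc)
    exact ha' (Ideal.mem_span_singleton.mpr ⟨d, by ring⟩)
  exact ⟨hc.unit, rfl⟩

theorem exists_associated_pow_of_notMem_iInf (hz : maximalIdeal R = Ideal.span {z}) {a : R}
    (ha : a ∉ ⨅ n : ℕ, Ideal.span {z ^ n}) : ∃ n, Associated (z ^ n) a := by
  by_contra hassoc
  refine ha (Ideal.mem_iInf.mpr fun n => ?_)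
  induction n with
  | zero => simp
  | succ n ih =>
    by_contra ha'
    exact hassoc ⟨n, associated_pow_of_mem_span_pow_of_notMem hz ih ha'⟩

theorem mem_span_pow_of_mul_eq_zero (hz : maximalIdeal R = Ideal.span {z})
    (hnil : ¬ IsNilpotent z) {a : R} (ha : a * z = 0) (n : ℕ) : a ∈ Ideal.span {z ^ n} := by
  induction n with
  | zero => simp
  | succ n ih =>
    obtain ⟨c, rfl⟩ := Ideal.mem_span_singleton.mp ih
    have hc : ¬ IsUnit c := fun hc =>
      hnil ⟨n + 1, hc.mul_left_eq_zero.mp (by rw [← ha]; ring)⟩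
    obtain ⟨d, rfl⟩ := Ideal.mem_span_singleton.mp (hz ▸ (mem_maximalIdeal c).mpr hc)
    exact Ideal.mem_span_singleton.mpr ⟨d, by ring⟩

theorem iInf_span_pow_le_span_mul (hz : maximalIdeal R = Ideal.span {z})
    (hnil : ¬ IsNilpotent z) :
    ⨅ n : ℕ, Ideal.span {z ^ n} ≤ Ideal.span {z} * ⨅ n : ℕ, Ideal.span {z ^ n} := by
  intro a ha
  rw [Ideal.mem_iInf] at ha
  obtain ⟨c, rfl⟩ := Ideal.mem_span_singleton'.mp (pow_one z ▸ ha 1)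
  refine Ideal.mem_span_singleton_mul.mpr ⟨c, Ideal.mem_iInf.mpr fun n => ?_, mul_comm z c⟩
  obtain ⟨e, he⟩ := Ideal.mem_span_singleton.mp (ha (n + 1))
  -- `c - zⁿe` annihilates `z`, so it lies in `zⁿR` together with `zⁿe`.
  have hann : (c - z ^ n * e) * z = 0 := by linear_combination he
  simpa using Ideal.add_mem _ (mem_span_pow_of_mul_eq_zero hz hnil hann n)
    (Ideal.mem_span_singleton.mpr ⟨e, rfl⟩)

theorem isPrime_iff_eq_bot_or_eq_maximalIdeal [IsDomain R] [Ring.DimensionLEOne R]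
    (P : Ideal R) : P.IsPrime ↔ P = ⊥ ∨ P = maximalIdeal R := by
  refine ⟨fun hP => or_iff_not_imp_left.mpr fun hP0 => eq_maximalIdeal (hP.isMaximal hP0), ?_⟩
  rintro (rfl | rfl)
  · exact Ideal.isPrime_bot
  · exact (maximalIdeal.isMaximal R).isPrime

end IsLocalRing

theorem noZeroDivisors_of_forall_associated_pow {R : Type*} [CommRing R] {z : R}
    (hnil : ¬ IsNilpotent z) (hassoc : ∀ a : R, a ≠ 0 → ∃ n, Associated (z ^ n) a) :
    NoZeroDivisors R := by
  refine ⟨fun {a b} hab => by_contra fun hne => ?_⟩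
  rw [not_or] at hne
  obtain ⟨m, hm⟩ := hassoc a hne.1
  obtain ⟨n, hn⟩ := hassoc b hne.2
  have hmn : Associated (z ^ (m + n)) (a * b) := pow_add z m n ▸ hm.mul_mul hn
  exact hnil ⟨m + n, hmn.eq_zero_iff.mpr hab⟩

/-- If every ideal of a local ring `R` is a direct sum of cyclic modules, and the maximal
ideal is `Rz` with `z` not nilpotent, then `R` is a PID and `Spec R = {0, M}`. -/
theorem pid_of_maximalIdeal_principal_not_nilpotent (R : Type) [CommRing R] [IsLocalRing R]
    (h : ∀ I : Ideal R, I.IsDirectSumOfCyclics) (z : R)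
    (hz : IsLocalRing.maximalIdeal R = Ideal.span ({z} : Set R))
    (hnil : ¬ IsNilpotent z) :
    IsPrincipalIdealRing R ∧ IsDomain R ∧
      (∀ P : Ideal R, P.IsPrime ↔ (P = ⊥ ∨ P = IsLocalRing.maximalIdeal R)) := by
  have hzJ : z ∈ Ideal.jacobson ⊥ := by
    rw [IsLocalRing.jacobson_eq_maximalIdeal ⊥ bot_ne_top, hz]
    exact Ideal.mem_span_singleton_self z
  have hJ : ⨅ n : ℕ, Ideal.span {z ^ n} = ⊥ :=
    (h _).eq_bot_of_le_span_mul hzJ (IsLocalRing.iInf_span_pow_le_span_mul hz hnil)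
  have hassoc : ∀ a : R, a ≠ 0 → ∃ n, Associated (z ^ n) a := fun a ha =>
    IsLocalRing.exists_associated_pow_of_notMem_iInf hz (hJ ▸ ha)
  have : NoZeroDivisors R := noZeroDivisors_of_forall_associated_pow hnil hassoc
  have hz0 : z ≠ 0 := fun h0 => hnil (h0 ▸ IsNilpotent.zero)
  have : Nontrivial R := ⟨⟨z, 0, hz0⟩⟩
  have : IsDomain R := NoZeroDivisors.to_isDomain R
  have hprime : Prime z :=
    (Ideal.span_singleton_prime hz0).mp (hz ▸ (IsLocalRing.maximalIdeal.isMaximal R).isPrime)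
  have : IsDiscreteValuationRing R :=
    .ofHasUnitMulPowIrreducibleFactorization ⟨z, hprime.irreducible, hassoc _⟩
  exact ⟨inferInstance, inferInstance, IsLocalRing.isPrime_iff_eq_bot_or_eq_maximalIdeal⟩
end

section
/- Let (R, M) be a commutative local ring such that every ideal of R is a direct sum of cyclic R-modules. Then the maximal ideal M is principal if and only if R is a principal ideal ring. -/
/-!
If `M = (m)` and `(x) ∩ (y) = 0` with `x, y ≠ 0`, then writing `x = a mᵏ`, `y = b mᵏ`, neither `a`
nor `b` can be a unit (otherwise one of `x, y` would lie in the ideal of the other), so both are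
divisible by `m` once more. Hence the ideal `N` generated by all such `a` satisfies `N = M N`. A
Nakayama-type argument, valid for ideals that are direct sums of cyclic modules without any
finiteness assumption, forces `N = 0`, so `x = 0`. Thus in a decomposition of an ideal into
cyclic summands at most one summand is nonzero, and the ideal is principal.
-/

namespace Submodule

theorem eq_zero_of_iSup_span_le_smul {R M ι : Type*} [CommRing R] [AddCommGroup M]
    [Module R M] {J : Ideal R} (hJ : J ≤ Ideal.jacobson ⊥) {x : ι → M}
    (hind : iSupIndep fun i => R ∙ x i) (hle : (⨆ i, R ∙ x i) ≤ J • ⨆ i, R ∙ x i) (t : ι) :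
    x t = 0 := by
  have hxt : x t ∈ J • (R ∙ x t) ⊔ ⨆ (i) (_ : i ≠ t), R ∙ x i := by
    have := hle (mem_iSup_of_mem t (mem_span_singleton_self _))
    rw [smul_iSup, iSup_split_single _ t] at this
    exact sup_le_sup_left (iSup₂_mono fun i _ => smul_le_right) _ this
  obtain ⟨p, hp, q, hq, hpq⟩ := mem_sup.mp hxt
  obtain ⟨j, hj, rfl⟩ := mem_smul_span_singleton.mp hp
  have hq_eq : q = (1 - j) • x t := by rw [sub_smul, one_smul]; exact eq_sub_of_add_eq' hpq
  have hq0 : (1 - j) • x t = 0 :=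
    disjoint_def.mp (hind t) _ (smul_mem _ _ (mem_span_singleton_self _)) (hq_eq ▸ hq)
  have hunit : IsUnit (1 - j) :=
    Ideal.isUnit_of_sub_one_mem_jacobson_bot _ (by simpa using neg_mem (hJ hj))
  exact hunit.smul_eq_zero.mp hq0

theorem isPrincipal_iSup_span_singleton {R M ι : Type*} [CommRing R] [AddCommGroup M]
    [Module R M] {x : ι → M} (hx : Pairwise fun i j => x i = 0 ∨ x j = 0) :
    (⨆ i, R ∙ x i).IsPrincipal := by
  by_cases hzero : ∀ i, x i = 0
  · exact ⟨0, by simp [hzero]⟩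
  obtain ⟨t, ht⟩ := not_forall.mp hzero
  refine ⟨x t, le_antisymm (iSup_le fun i => ?_) (le_iSup (fun i => R ∙ x i) t)⟩
  rcases eq_or_ne i t with rfl | hi
  · exact le_rfl
  · rw [(hx hi).resolve_right ht, span_zero_singleton]
    exact bot_le

end Submodule

open Ideal IsLocalRing

theorem Ideal.IsDirectSumOfCyclics.eq_bot_of_le_smul {R : Type} [CommRing R] {I J : Ideal R}
    (hI : I.IsDirectSumOfCyclics) (hJ : J ≤ jacobson ⊥) (hle : I ≤ J • I) : I = ⊥ := by
  obtain ⟨ι, z, hind, rfl⟩ := hI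
  refine eq_bot_iff.mpr (iSup_le fun i => ?_)
  rw [Submodule.eq_zero_of_iSup_span_le_smul hJ hind hle i, Submodule.span_zero_singleton]

theorem Ideal.not_isUnit_of_disjoint_span {R : Type*} [CommRing R] {x y a b c : R}
    (hxy : Disjoint (span {x}) (span {y})) (hy : y ≠ 0) (hxa : x = a * c) (hyb : y = b * c) :
    ¬IsUnit a := by
  rintro ⟨u, rfl⟩
  have hyx : y ∈ span {x} :=
    mem_span_singleton'.mpr ⟨b * ↑u⁻¹, by rw [hxa, hyb, mul_assoc, Units.inv_mul_cancel_left]⟩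
  exact hy (Submodule.disjoint_def.mp hxy y hyx (mem_span_singleton_self y))

theorem IsLocalRing.eq_zero_or_eq_zero_of_disjoint_span {R : Type} [CommRing R] [IsLocalRing R]
    (h : ∀ I : Ideal R, I.IsDirectSumOfCyclics) {m x y : R} (hm : maximalIdeal R = span {m})
    (hxy : Disjoint (span {x}) (span {y})) : x = 0 ∨ y = 0 := by
  by_contra! ⟨hx, hy⟩
  set N := span {a | ∃ b k, x = a * m ^ k ∧ y = b * m ^ k}
  have hN : N ≤ maximalIdeal R • N := by
    refine span_le.mpr ?_
    rintro a ⟨b, k, hxa, hyb⟩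
    have ha : a ∈ span {m} :=
      hm ▸ (mem_maximalIdeal _).mpr (not_isUnit_of_disjoint_span hxy hy hxa hyb)
    have hb : b ∈ span {m} :=
      hm ▸ (mem_maximalIdeal _).mpr (not_isUnit_of_disjoint_span hxy.symm hx hyb hxa)
    obtain ⟨a', rfl⟩ := mem_span_singleton'.mp ha
    obtain ⟨b', rfl⟩ := mem_span_singleton'.mp hb
    have ha' : a' ∈ N := subset_span ⟨b', k + 1, by rw [hxa]; ring, by rw [hyb]; ring⟩
    rw [mul_comm]
    exact Submodule.smul_mem_smul (hm ▸ mem_span_singleton_self m) ha'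
  have hxN : x ∈ N := subset_span ⟨y, 0, by simp, by simp⟩
  rw [(h N).eq_bot_of_le_smul (maximalIdeal_le_jacobson ⊥) hN] at hxN
  exact hx ((Submodule.mem_bot R).mp hxN)

/-- If every ideal of a local ring is a direct sum of cyclic modules, then the maximal ideal
is principal iff `R` is a principal ideal ring. -/
theorem maximalIdeal_principal_iff_pir (R : Type) [CommRing R] [IsLocalRing R]
    (h : ∀ I : Ideal R, I.IsDirectSumOfCyclics) :
    (IsLocalRing.maximalIdeal R).IsPrincipal ↔ IsPrincipalIdealRing R := by
  refine ⟨fun ⟨m, hm⟩ => ⟨fun I => ?_⟩, fun _ => IsPrincipalIdealRing.principal _⟩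
  obtain ⟨ι, z, hind, rfl⟩ := h I
  exact Submodule.isPrincipal_iSup_span_singleton fun i j hij =>
    eq_zero_or_eq_zero_of_disjoint_span h hm (hind.pairwiseDisjoint hij)
end

section
/- Let (R, M) be a commutative local ring such that every ideal of R is a direct sum of cyclic R-modules. Then M is finitely generated if and only if R is Noetherian. -/
/-! Write `M = ⨆ᵢ R yᵢ` as an independent sum. Distinct summands annihilate each other, so
`M yᵢ ⊆ (yᵢ²)` and hence `M (yᵢᵏ) = (yᵢᵏ⁺¹)` for `k ≥ 1`: an element of `(yᵢᵏ) \ (yᵢᵏ⁺¹)` generates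
`(yᵢᵏ)`, so every ideal inside `(yᵢ)` is some `(yᵢᵏ)` or lies in `T = ⋂ₖ (yᵢᵏ)`. From this one gets
`T ⊆ M T`, and since `T` is itself an independent sum of cyclic ideals, Nakayama applied to each
summand gives `T = 0`. Thus every `R yᵢ` is Noetherian, and a finitely generated `M` lies in finitely
many of them. -/

open IsLocalRing Ideal

section Modules

variable {R M ι : Type*} [CommRing R] [AddCommGroup M] [Module R M]

theorem Submodule.iSup_eq_bot_of_iSupIndep_of_le_smul {P : ι → Submodule R M}
    (hind : iSupIndep P) (hfg : ∀ i, (P i).FG) {J : Ideal R} (hJ : J ≤ jacobson ⊥)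
    (hle : ⨆ i, P i ≤ J • ⨆ i, P i) : ⨆ i, P i = ⊥ := by
  refine iSup_eq_bot.mpr fun i => eq_bot_of_le_smul_of_le_jacobson_bot J (P i) (hfg i) ?_ hJ
  have hcover : P i ≤ J • P i ⊔ ⨆ (j) (_ : j ≠ i), P j := by
    refine (le_iSup P i).trans (hle.trans ?_)
    rw [smul_iSup]
    refine iSup_le fun j => ?_
    rcases eq_or_ne j i with rfl | hji
    · exact le_sup_left
    · exact smul_le_right.trans ((le_biSup P hji).trans le_sup_right)
  calc P i ≤ (J • P i ⊔ ⨆ (j) (_ : j ≠ i), P j) ⊓ P i := le_inf hcover le_rfl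
    _ = J • P i := by rw [sup_inf_assoc_of_le _ smul_le_right, (hind i).symm.eq_bot, sup_bot_eq]

theorem isNoetherian_of_fg_of_le_iSup {N : Submodule R M} (hN : N.FG) {P : ι → Submodule R M}
    [∀ i, IsNoetherian R (P i)] (hle : N ≤ ⨆ i, P i) : IsNoetherian R N := by
  obtain ⟨F, hF⟩ := CompleteLattice.IsCompactElement.exists_finset_of_le_iSup _
    ((Submodule.fg_iff_compact N).mp hN) P hle
  rw [iSup_subtype'] at hF
  exact isNoetherian_of_le hF

end Modules

theorem Ideal.IsDirectSumOfCyclics.eq_bot_of_le_mul {R : Type} [CommRing R] [IsLocalRing R]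
    {I : Ideal R} (hI : I.IsDirectSumOfCyclics) (hle : I ≤ maximalIdeal R * I) : I = ⊥ := by
  obtain ⟨ι, x, hind, rfl⟩ := hI
  exact Submodule.iSup_eq_bot_of_iSupIndep_of_le_smul hind
    (fun i => Submodule.fg_span_singleton (x i)) (maximalIdeal_le_jacobson ⊥) hle

section Orthogonal

variable {R ι : Type*} [CommRing R] {y : ι → R} (hind : iSupIndep fun i => span {y i})
include hind

theorem mul_eq_zero_of_iSupIndep_span_singleton_s11 {i j : ι} (hij : i ≠ j) : y i * y j = 0 :=
  Submodule.disjoint_def.mp (hind.pairwiseDisjoint hij) _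
    (mul_mem_right _ _ (mem_span_singleton_self _)) (mul_mem_left _ _ (mem_span_singleton_self _))

theorem iSup_span_singleton_mul_le_of_iSupIndep (i : ι) :
    (⨆ j, span {y j}) * span {y i} ≤ span {y i ^ 2} := by
  rw [iSup_mul]
  refine iSup_le fun j => ?_
  rw [span_singleton_mul_span_singleton]
  rcases eq_or_ne j i with rfl | hji
  · rw [sq]
  · rw [mul_eq_zero_of_iSupIndep_span_singleton_s11 hind hji, span_singleton_eq_bot.mpr rfl]
    exact bot_le

end Orthogonal

theorem IsLocalRing.span_singleton_eq_of_notMem_maximalIdeal_mul {R : Type*} [CommRing R]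
    [IsLocalRing R] {a b : R} (hab : a ∈ span {b}) (ha : a ∉ maximalIdeal R * span {b}) :
    span {a} = span {b} := by
  obtain ⟨r, rfl⟩ := mem_span_singleton'.mp hab
  have hr : IsUnit r := by
    by_contra hr
    exact ha (mul_mem_mul ((mem_maximalIdeal r).mpr hr) (mem_span_singleton_self b))
  exact span_singleton_mul_left_unit hr b

section PowerChain

variable {R : Type*} [CommRing R] [IsLocalRing R] {y : R} (hy : y ∈ maximalIdeal R)
  (hmy : maximalIdeal R * span {y} ≤ span {y ^ 2})

include hy hmy

theorem maximalIdeal_mul_span_pow_succ (k : ℕ) :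
    maximalIdeal R * span {y ^ (k + 1)} = span {y ^ (k + 2)} := by
  have hsplit : ∀ n, span {y ^ (n + 1)} = span {y} * span {y ^ n} := fun n => by
    rw [span_singleton_mul_span_singleton, pow_succ']
  apply le_antisymm
  · calc maximalIdeal R * span {y ^ (k + 1)} = maximalIdeal R * span {y} * span {y ^ k} := by
          rw [hsplit, mul_assoc]
      _ ≤ span {y ^ 2} * span {y ^ k} := mul_mono_left hmy
      _ = span {y ^ (k + 2)} := by rw [span_singleton_mul_span_singleton, ← pow_add, add_comm]
  · rw [hsplit (k + 1)]
    exact mul_mono_left ((span_singleton_le_iff_mem _).mpr hy)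

theorem eq_span_pow_of_le_of_not_le {N : Ideal R} {k : ℕ} (hle : N ≤ span {y ^ (k + 1)})
    (hnle : ¬ N ≤ span {y ^ (k + 2)}) : N = span {y ^ (k + 1)} := by
  obtain ⟨a, haN, ha⟩ := SetLike.not_le_iff_exists.mp hnle
  rw [← maximalIdeal_mul_span_pow_succ hy hmy] at ha
  have hspan := span_singleton_eq_of_notMem_maximalIdeal_mul (hle haN) ha
  exact le_antisymm hle (hspan ▸ (span_singleton_le_iff_mem _).mpr haN)

theorem eq_span_pow_or_le_iInf {N : Ideal R} (hN : N ≤ span {y}) :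
    (∃ k, N = span {y ^ (k + 1)}) ∨ N ≤ ⨅ n, span {y ^ (n + 1)} := by
  refine or_iff_not_imp_right.mpr fun hT => ?_
  obtain ⟨k, hk, hk'⟩ := Nat.exists_not_and_succ_of_not_zero_of_exists
    (p := fun n => ¬ N ≤ span {y ^ (n + 1)}) (by simpa using hN)
    (not_forall.mp (le_iInf_iff.not.mp hT))
  exact ⟨k, eq_span_pow_of_le_of_not_le hy hmy (not_not.mp hk) hk'⟩

theorem iInf_span_pow_le_maximalIdeal_mul :
    ⨅ n, span {y ^ (n + 1)} ≤ maximalIdeal R * ⨅ n, span {y ^ (n + 1)} := by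
  intro t ht
  have hmem : ∀ n, t ∈ span {y ^ (n + 1)} := (Submodule.mem_iInf _).mp ht
  obtain ⟨w, hw, rfl⟩ : ∃ w ∈ span {y}, y * w = t := by
    obtain ⟨z, rfl⟩ := mem_span_singleton'.mp (hmem 1)
    exact ⟨z * y, mul_mem_left _ _ (mem_span_singleton_self y), by ring⟩
  rcases eq_span_pow_or_le_iInf hy hmy ((span_singleton_le_iff_mem _).mpr hw) with ⟨k, hk⟩ | hT
  · -- `(y w) = (y ^ (k + 2))`, yet `y w ∈ (y ^ (k + 3)) = M (y ^ (k + 2))`: Nakayama kills `y w`.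
    have hspan : span {y * w} = span {y ^ (k + 2)} := by
      rw [← span_singleton_mul_span_singleton, hk, span_singleton_mul_span_singleton, ← pow_succ']
    have hzero : span {y * w} = ⊥ := by
      refine Submodule.eq_bot_of_le_smul_of_le_jacobson_bot _ _ (Submodule.fg_span_singleton _) ?_
        (maximalIdeal_le_jacobson ⊥)
      rw [smul_eq_mul, span_singleton_le_iff_mem, hspan, maximalIdeal_mul_span_pow_succ hy hmy]
      exact hmem (k + 2)
    rw [span_singleton_eq_bot.mp hzero]
    exact zero_mem _
  · exact mul_mem_mul hy (hT (mem_span_singleton_self w))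

end PowerChain

theorem isNoetherian_span_singleton_of_forall_isDirectSumOfCyclics {R : Type} [CommRing R]
    [IsLocalRing R] (h : ∀ I : Ideal R, I.IsDirectSumOfCyclics) {y : R}
    (hy : y ∈ maximalIdeal R) (hmy : maximalIdeal R * span {y} ≤ span {y ^ 2}) :
    IsNoetherian R (span {y}) := by
  have hT : ⨅ n, span {y ^ (n + 1)} = ⊥ :=
    (h _).eq_bot_of_le_mul (iInf_span_pow_le_maximalIdeal_mul hy hmy)
  refine isNoetherian_submodule.mpr fun N hN => ?_
  rcases eq_span_pow_or_le_iInf hy hmy hN with ⟨k, rfl⟩ | hle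
  · exact Submodule.fg_span_singleton _
  · rw [le_bot_iff.mp (hle.trans hT.le)]
    exact Submodule.fg_bot

theorem IsLocalRing.isNoetherianRing_of_isNoetherian_maximalIdeal {R : Type*} [CommRing R]
    [IsLocalRing R] [IsNoetherian R (maximalIdeal R)] : IsNoetherianRing R := by
  refine (isNoetherianRing_iff_ideal_fg R).mpr fun I => ?_
  rcases eq_or_ne I ⊤ with rfl | hI
  · exact ⟨{1}, by simp⟩
  · exact isNoetherian_submodule.mp ‹_› I (le_maximalIdeal hI)

/-- If every ideal of a local ring is a direct sum of cyclic modules, then the maximal ideal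
is finitely generated iff `R` is Noetherian. -/
theorem maximalIdeal_fg_iff_noetherian (R : Type) [CommRing R] [IsLocalRing R]
    (h : ∀ I : Ideal R, I.IsDirectSumOfCyclics) :
    (IsLocalRing.maximalIdeal R).FG ↔ IsNoetherianRing R := by
  refine ⟨fun hfg => ?_, fun _ => IsNoetherian.noetherian _⟩
  obtain ⟨ι, y, hind, hsup⟩ := h (maximalIdeal R)
  have hy : ∀ i, y i ∈ maximalIdeal R := fun i =>
    hsup ▸ Submodule.mem_iSup_of_mem i (mem_span_singleton_self _)
  have hmy : ∀ i, maximalIdeal R * span {y i} ≤ span {y i ^ 2} := fun i =>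
    hsup ▸ iSup_span_singleton_mul_le_of_iSupIndep hind i
  have := fun i => isNoetherian_span_singleton_of_forall_isDirectSumOfCyclics h (hy i) (hmy i)
  have := isNoetherian_of_fg_of_le_iSup hfg hsup.ge
  exact isNoetherianRing_of_isNoetherian_maximalIdeal
end

section
/- Let (R, M) be a commutative local ring with M = Rx ⊕ L (internal direct sum) for some ideal L and element x ∈ R, and suppose R/Ann(x) is a principal ideal ring. Then every nonzero element of Rx has the form a·xⁿ for some unit a ∈ R and positive integer n. -/
/-!
Every element of `L` kills `x`, since `L x ⊆ Rx ∩ L = 0`. Hence, in `S = R ⧸ Ann(x)`, the image of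
`M = Rx + L` is generated by the class of `x`, i.e. `S` is a Noetherian local ring with principal
maximal ideal `(x̄)`. By Krull's intersection theorem every nonzero element of such a ring is a
unit times a power of the generator. Writing `m = c x` with `c̄ ≠ 0` in `S` gives `c̄ = ū x̄ ⁿ`,
and a lift `u` of `ū` is a unit of `R` with `m = c x = u x ^ (n + 1)`.
-/

open IsLocalRing

theorem IsLocalRing.exists_isUnit_mul_pow_of_maximalIdeal_eq_span {S : Type*} [CommRing S]
    [IsLocalRing S] [IsNoetherianRing S] {π : S} (hπ : maximalIdeal S = Ideal.span {π})
    {r : S} (hr : r ≠ 0) : ∃ u n, IsUnit u ∧ r = u * π ^ n := by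
  by_contra! h
  have hmem : ∀ n, r ∈ Ideal.span {π} ^ n := by
    intro n
    induction n with
    | zero => simp
    | succ n ih =>
      rw [Ideal.span_singleton_pow, Ideal.mem_span_singleton'] at ih ⊢
      obtain ⟨a, rfl⟩ := ih
      have ha : a ∈ Ideal.span {π} := hπ ▸ (mem_maximalIdeal a).2 fun hu => h a n hu rfl
      obtain ⟨b, rfl⟩ := Ideal.mem_span_singleton'.1 ha
      exact ⟨b, by ring⟩
  have hbot := Ideal.iInf_pow_eq_bot_of_isLocalRing (Ideal.span {π})
    (hπ ▸ (maximalIdeal.isMaximal S).ne_top)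
  exact hr (by simpa [hbot] using Submodule.mem_iInf _ |>.2 hmem)

theorem Ideal.le_torsionOf_of_disjoint {R : Type*} [CommRing R] {x : R} {L : Ideal R}
    (h : Disjoint (Submodule.span R {x}) L) : L ≤ Ideal.torsionOf R R x := fun q hq =>
  (Ideal.mem_torsionOf_iff x q).2 <| Submodule.disjoint_def.1 h _
    (Submodule.smul_mem _ q (Submodule.mem_span_singleton_self x)) (L.mul_mem_right x hq)

theorem IsLocalRing.maximalIdeal_quotient_eq_span_of_sup_eq {R : Type*} [CommRing R]
    [IsLocalRing R] {x : R} {L I : Ideal R} [IsLocalRing (R ⧸ I)] (hLI : L ≤ I)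
    (hsum : Submodule.span R {x} ⊔ L = maximalIdeal R) :
    maximalIdeal (R ⧸ I) = Ideal.span {Ideal.Quotient.mk I x} := by
  rw [← map_maximalIdeal_of_surjective _ Ideal.Quotient.mk_surjective, ← hsum, Ideal.map_sup,
    Ideal.map_mk_eq_bot_of_le hLI, sup_bot_eq, Ideal.map_span, Set.image_singleton]

/-- If `M = Rx ⊕ L` in a local ring and `R/Ann(x)` is a principal ideal ring, then every
nonzero element of `Rx` has the form `a·xⁿ` with `a` a unit and `n ≥ 1`. -/
theorem elements_of_Rx_are_unit_mul_pow (R : Type) [CommRing R] [IsLocalRing R]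
    (x : R) (L : Ideal R)
    (hdisj : Disjoint (Submodule.span R ({x} : Set R)) L)
    (hsum : Submodule.span R ({x} : Set R) ⊔ L = IsLocalRing.maximalIdeal R)
    (hpir : IsPrincipalIdealRing (R ⧸ Ideal.torsionOf R R x)) :
    ∀ m ∈ Submodule.span R ({x} : Set R), m ≠ 0 →
      ∃ (a : R) (n : ℕ), IsUnit a ∧ 0 < n ∧ m = a * x ^ n := by
  intro m hm hm0
  obtain ⟨c, rfl⟩ := Submodule.mem_span_singleton.1 hm
  set I := Ideal.torsionOf R R x
  have hc : Ideal.Quotient.mk I c ≠ 0 := by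
    rwa [Ne, Ideal.Quotient.eq_zero_iff_mem, Ideal.mem_torsionOf_iff]
  have : Nontrivial (R ⧸ I) := ⟨⟨_, _, hc⟩⟩
  have := IsLocalRing.of_surjective' _ (Ideal.Quotient.mk_surjective (I := I))
  have := IsLocalHom.of_surjective _ (Ideal.Quotient.mk_surjective (I := I))
  have : IsNoetherianRing (R ⧸ I) := PrincipalIdealRing.isNoetherianRing
  obtain ⟨ū, n, hū, hcu⟩ := exists_isUnit_mul_pow_of_maximalIdeal_eq_span
    (maximalIdeal_quotient_eq_span_of_sup_eq (Ideal.le_torsionOf_of_disjoint hdisj) hsum) hc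
  obtain ⟨u, rfl⟩ := Ideal.Quotient.mk_surjective ū
  refine ⟨u, n + 1, (isUnit_map_iff _ u).1 hū, n.succ_pos, ?_⟩
  have hcx : (c - u * x ^ n) • x = 0 := by
    rw [← Ideal.mem_torsionOf_iff, ← Ideal.Quotient.eq]
    simpa using hcu
  rw [smul_eq_mul, sub_mul, sub_eq_zero] at hcx
  rw [smul_eq_mul, hcx, pow_succ, mul_assoc]
end

section
/- Let (R, M) be a commutative local ring with M = Rx ⊕ L where L is a homogeneous semisimple ideal (a direct sum of simple R-modules Rw_λ, λ ∈ Λ) and R/Ann(x) is a principal ideal ring. Then every proper ideal I of R has the form I = Rx' ⊕ (⊕_{γ∈Γ} Rw'_γ) where |Γ| ≤ |Λ|, each Rw'_γ is a simple R-module, and R/Ann(x') is a principal ideal ring. -/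
/-!
The projection `Rx ∩ (I + L)` of `I` to the cyclic summand is a submodule of `Rx ≅ R ⧸ Ann x`,
hence cyclic, generated by some `y = a • x`. Lifting `y` to `x' ∈ I` with `x' - y ∈ L` changes
nothing modulo `L`, and since the maximal ideal kills `L` while `Rx ∩ L = 0`, `Ann x' = Ann y`
contains `Ann x`; so `R ⧸ Ann x'` is a quotient of a principal ideal ring and `I = Rx' ⊕ (I ∩ L)`.
Finally `I ∩ L` is a subspace of the `R ⧸ M`-vector space `L`: a basis of it gives the simple
summands, and there are at most `dim L ≤ |Λ|` of them.
-/

open Submodule Ideal Cardinal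

universe u v

theorem iSupIndep_option_elim {α ι : Type*} [CompleteLattice α] [IsModularLattice α]
    {a : α} {t : ι → α} (ht : iSupIndep t) (ha : Disjoint a (⨆ i, t i)) :
    iSupIndep fun o : Option ι => o.elim a t := by
  rintro (_ | i)
  · exact ha.mono_right <| iSup₂_le fun
      | none, h => absurd rfl h
      | some i, _ => le_iSup t i
  · have hle : ⨆ (o : Option ι) (_ : o ≠ some i), o.elim a t ≤ (⨆ (j) (_ : j ≠ i), t j) ⊔ a :=
      iSup₂_le fun
        | none, _ => le_sup_right
        | some j, h => le_sup_of_le_left <| le_iSup₂_of_le j (fun hj => h (congrArg some hj)) le_rfl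
    refine Disjoint.mono_right hle <| (ht i).disjoint_sup_right_of_disjoint_sup_left ?_
    exact (ha.mono_right <| sup_le (le_iSup t i) (iSup₂_le fun j _ => le_iSup t j)).symm

section

variable {R : Type*} {A : Type u} [CommRing R] [AddCommGroup A] [Module R A]

theorem isSimpleModule_span_singleton_of_le_torsionOf {𝔪 : Ideal R} [𝔪.IsMaximal] {y : A}
    (hy : y ≠ 0) (h𝔪 : 𝔪 ≤ torsionOf R A y) : IsSimpleModule R (R ∙ y) := by
  have htors : torsionOf R A y = 𝔪 :=
    (IsMaximal.eq_of_le ‹_› (by rwa [Ne, torsionOf_eq_top_iff]) h𝔪).symm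
  exact isSimpleModule_iff_quot_maximal.mpr
    ⟨_, htors ▸ ‹_›, ⟨(quotTorsionOfEquivSpanSingleton R A y).symm⟩⟩

theorem isPrincipalIdealRing_quotient_torsionOf_smul (x : A) (a : R)
    [IsPrincipalIdealRing (R ⧸ torsionOf R A x)] :
    IsPrincipalIdealRing (R ⧸ torsionOf R A (a • x)) := by
  have hle : torsionOf R A x ≤ torsionOf R A (a • x) := fun r hr => by
    rw [mem_torsionOf_iff] at hr ⊢
    rw [smul_comm, hr, smul_zero]
  exact IsPrincipalIdealRing.of_surjective _ (Ideal.Quotient.factor_surjective hle)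

theorem exists_eq_span_singleton_smul_of_le_span_singleton {x : A}
    [IsPrincipalIdealRing (R ⧸ torsionOf R A x)] {P : Submodule R A} (hP : P ≤ R ∙ x) :
    ∃ a : R, P = R ∙ (a • x) := by
  set f := LinearMap.toSpanSingleton R A x
  set mk := Ideal.Quotient.mk (torsionOf R A x)
  obtain ⟨c, hc⟩ := (IsPrincipalIdealRing.principal (Ideal.map mk (P.comap f))).principal
  obtain ⟨a, rfl⟩ := Ideal.Quotient.mk_surjective c
  have hcomap : ∀ J : Ideal R, Ideal.comap mk (Ideal.map mk J) = J ⊔ LinearMap.ker f := fun J => by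
    rw [comap_map_of_surjective mk Ideal.Quotient.mk_surjective, ← RingHom.ker_eq_comap_bot, mk_ker]
    rfl
  have hJ : P.comap f = span {a} ⊔ LinearMap.ker f := by
    rw [← hcomap, Ideal.map_span, Set.image_singleton, ← submodule_span_eq, ← hc, hcomap,
      sup_eq_left.mpr (LinearMap.ker_le_comap f)]
  refine ⟨a, ?_⟩
  rw [← map_comap_eq_of_le (hP.trans (LinearMap.span_singleton_eq_range R A x).le), hJ,
    Submodule.map_sup, LinearMap.le_ker_iff_map.mp le_rfl, sup_bot_eq, ← submodule_span_eq,
    Submodule.map_span, Set.image_singleton, LinearMap.toSpanSingleton_apply]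

section Local

variable [IsLocalRing R]

theorem torsionOf_add_eq_of_disjoint {x y l : A} {L : Submodule R A}
    (hL : IsLocalRing.maximalIdeal R ≤ L.annihilator) (hxL : Disjoint (R ∙ x) L)
    (hy : y ∈ R ∙ x) (hl : l ∈ L) (hzero : y = 0 → l = 0) :
    torsionOf R A (y + l) = torsionOf R A y := by
  ext r
  simp only [mem_torsionOf_iff, smul_add]
  constructor
  · intro h
    refine disjoint_def.mp hxL _ (smul_mem _ r hy) ?_
    rw [eq_neg_of_add_eq_zero_left h]
    exact neg_mem (smul_mem _ r hl)
  · intro h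
    rw [h, zero_add]
    by_cases hy0 : y = 0
    · rw [hzero hy0, smul_zero]
    -- `r` kills the nonzero `y`, so it is not a unit
    have hr : r ∈ IsLocalRing.maximalIdeal R := fun hu => hy0 ((hu.smul_eq_zero).mp h)
    exact mem_annihilator.mp (hL hr) l hl

theorem exists_span_singleton_sup_inf_eq {x : A} {L : Submodule R A}
    (hL : IsLocalRing.maximalIdeal R ≤ L.annihilator) (hxL : Disjoint (R ∙ x) L)
    [IsPrincipalIdealRing (R ⧸ torsionOf R A x)] {I : Submodule R A} (hI : I ≤ (R ∙ x) ⊔ L) :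
    ∃ x' : A, (R ∙ x') ⊔ (I ⊓ L) = I ∧ Disjoint (R ∙ x') L ∧
      IsPrincipalIdealRing (R ⧸ torsionOf R A x') := by
  obtain ⟨a, hP⟩ := exists_eq_span_singleton_smul_of_le_span_singleton
    (inf_le_left : (R ∙ x) ⊓ (I ⊔ L) ≤ R ∙ x)
  set y := a • x
  have hy : y ∈ R ∙ x := smul_mem _ a (mem_span_singleton_self x)
  have hyIL : y ∈ I ⊔ L := (hP ▸ mem_span_singleton_self y : y ∈ (R ∙ x) ⊓ (I ⊔ L)).2
  -- lift `y` to `x' ∈ I`, taking `x' = 0` when `y = 0` so that `Ann x' = Ann y`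
  obtain ⟨x', hx'I, hx'L, hzero⟩ : ∃ x' ∈ I, x' - y ∈ L ∧ (y = 0 → x' - y = 0) := by
    by_cases hy0 : y = 0
    · exact ⟨0, I.zero_mem, by simp [hy0], by simp [hy0]⟩
    · obtain ⟨i, hi, l, hl, hil⟩ := mem_sup.mp hyIL
      exact ⟨i, hi, by rw [← hil, sub_add_cancel_left]; exact neg_mem hl, fun h => absurd h hy0⟩
  have htors : torsionOf R A x' = torsionOf R A y := by
    simpa using torsionOf_add_eq_of_disjoint hL hxL hy hx'L hzero
  refine ⟨x', le_antisymm (sup_le ((span_singleton_le_iff_mem _ _).mpr hx'I) inf_le_left) ?_,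
    ?_, htors ▸ isPrincipalIdealRing_quotient_torsionOf_smul x a⟩
  · intro i hi
    obtain ⟨z, hz, l, hl, rfl⟩ := mem_sup.mp (hI hi)
    have hzP : z ∈ R ∙ y := hP ▸ ⟨hz, by simpa using sub_mem (mem_sup_left hi) (mem_sup_right hl)⟩
    obtain ⟨s, rfl⟩ := mem_span_singleton.mp hzP
    have hrest : s • y + l - s • x' = l - s • (x' - y) := by rw [smul_sub]; abel
    refine mem_sup.mpr ⟨s • x', smul_mem _ s (mem_span_singleton_self x'), _,
      ⟨sub_mem hi (I.smul_mem s hx'I), ?_⟩, add_sub_cancel _ _⟩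
    rw [hrest]
    exact sub_mem hl (L.smul_mem s hx'L)
  · refine disjoint_def.mpr fun z hz hzL => ?_
    obtain ⟨r, rfl⟩ := mem_span_singleton.mp hz
    have hry : r • y = 0 := by
      refine disjoint_def.mp hxL _ (smul_mem _ r hy) ?_
      have : r • y = r • x' - r • (x' - y) := by rw [smul_sub, sub_sub_cancel]
      rw [this]
      exact sub_mem hzL (L.smul_mem r hx'L)
    rw [← mem_torsionOf_iff, htors, mem_torsionOf_iff]
    exact hry

end Local

section Semisimple

variable {𝔪 : Ideal R} [𝔪.IsMaximal]

theorem exists_iSupIndep_spans_eq_of_isTorsionBySet (h𝔪 : Module.IsTorsionBySet R A 𝔪)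
    {Λ : Type v} {w : Λ → A} (hw : span R (Set.range w) = ⊤) (N : Submodule R A) :
    ∃ t : Set A, lift.{v} #t ≤ lift.{u} #Λ ∧ 0 ∉ t ∧
      iSupIndep (fun e : t => R ∙ (e : A)) ∧ ⨆ e : t, R ∙ (e : A) = N := by
  let _ := Ideal.Quotient.field 𝔪
  let _ := h𝔪.module
  have _ := h𝔪.isScalarTower (S := R)
  have hspan : ∀ s : Set A, (span (R ⧸ 𝔪) s).restrictScalars R = span R s :=
    restrictScalars_span R (R ⧸ 𝔪) Ideal.Quotient.mk_surjective
  obtain ⟨t, -, hspan_t, hli⟩ := exists_linearIndependent (R ⧸ 𝔪) (N : Set A)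
  have hrank : Module.rank (R ⧸ 𝔪) A ≤ #(Set.range w) := by
    have htop : span (R ⧸ 𝔪) (Set.range w) = ⊤ := by
      rw [← restrictScalars_eq_top_iff R, hspan, hw]
    calc Module.rank (R ⧸ 𝔪) A = Module.rank (R ⧸ 𝔪) (⊤ : Submodule (R ⧸ 𝔪) A) :=
        (rank_top _ _).symm
      _ ≤ #(Set.range w) := htop ▸ rank_span_le _
  refine ⟨t, ?_, fun h0 => hli.ne_zero ⟨0, h0⟩ rfl, fun e => ?_, ?_⟩
  · calc lift.{v} #t ≤ lift.{v} #(Set.range w) := lift_le.mpr (hli.cardinal_le_rank.trans hrank)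
      _ ≤ lift.{u} #Λ := mk_range_le_lift
  · have := congrArg (restrictScalars R) (disjoint_iff.mp (hli.iSupIndep_span_singleton e))
    simp only [restrictScalars_inf, restrictScalars_iSup, restrictScalars_bot, hspan] at this
    exact disjoint_iff.mpr this
  · rw [← Submodule.span_range_eq_iSup, Subtype.range_coe, ← hspan, hspan_t, hspan,
      Submodule.span_eq]

theorem exists_iSupIndep_isSimpleModule_spans_eq {L : Submodule R A} (h𝔪 : 𝔪 ≤ L.annihilator)
    {Λ : Type v} {w : Λ → A} (hw : span R (Set.range w) = L) {N : Submodule R A} (hN : N ≤ L) :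
    ∃ (Γ : Type u) (b : Γ → A), lift.{v} #Γ ≤ lift.{u} #Λ ∧ iSupIndep (fun γ => R ∙ b γ) ∧
      ⨆ γ, R ∙ b γ = N ∧ ∀ γ, IsSimpleModule R (R ∙ b γ) := by
  let w' : Λ → L := fun l => ⟨w l, hw ▸ subset_span ⟨l, rfl⟩⟩
  have htop : span R (Set.range w') = ⊤ := by
    apply map_injective_of_injective L.injective_subtype
    rw [Submodule.map_span, ← Set.range_comp, map_subtype_top]
    exact hw
  have htors : Module.IsTorsionBySet R L 𝔪 := fun y m =>
    Subtype.ext (mem_annihilator.mp (h𝔪 m.2) y y.2)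
  obtain ⟨t, hcard, h0, hind, hsup⟩ :=
    exists_iSupIndep_spans_eq_of_isTorsionBySet htors htop (N.comap L.subtype)
  have hmap : ∀ y : L, R ∙ (y : A) = (R ∙ y).map L.subtype := fun y =>
    (map_subtype_span_singleton y).symm
  refine ⟨t, fun γ => (γ : L), hcard, ?_, ?_, fun γ => ?_⟩
  · simp only [hmap]
    exact L.subtype.iSupIndep_map L.injective_subtype hind
  · simp only [hmap, ← Submodule.map_iSup, hsup, map_comap_subtype, inf_of_le_right hN]
  · have hγ : ((γ : L) : A) ≠ 0 := fun h => h0 (coe_eq_zero.mp h ▸ γ.2)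
    exact isSimpleModule_span_singleton_of_le_torsionOf hγ fun m hm =>
      (mem_torsionOf_iff _ _).mpr (mem_annihilator.mp (h𝔪 hm) _ (γ : L).2)

end Semisimple
end

/-- If `M = Rx ⊕ (⊕_λ Rw_λ)` with each `Rw_λ` simple and `R/Ann(x)` a principal ideal ring,
then every proper ideal `I` has the form `Rx' ⊕ (⊕_{γ∈Γ} Rw'_γ)` with `|Γ| ≤ |Λ|`,
each `Rw'_γ` simple, and `R/Ann(x')` a principal ideal ring. -/
theorem ideal_structure_of_one_nonsimple_summand (R : Type) [CommRing R] [IsLocalRing R]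
    (Λ : Type) (x : R) (w : Λ → R)
    (hindep : iSupIndep (fun o : Option Λ =>
      o.elim (Submodule.span R ({x} : Set R)) (fun l => Submodule.span R ({w l} : Set R))))
    (hsum : Submodule.span R ({x} : Set R) ⊔ (⨆ l, Submodule.span R ({w l} : Set R)) =
      IsLocalRing.maximalIdeal R)
    (hsimple : ∀ l, IsSimpleModule R (Submodule.span R ({w l} : Set R)))
    (hpir : IsPrincipalIdealRing (R ⧸ Ideal.torsionOf R R x)) :
    ∀ I : Ideal R, I ≠ ⊤ →
      ∃ (Γ : Type) (x' : R) (w' : Γ → R),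
        Cardinal.mk Γ ≤ Cardinal.mk Λ ∧
        iSupIndep (fun o : Option Γ =>
          o.elim (Submodule.span R ({x'} : Set R))
            (fun g => Submodule.span R ({w' g} : Set R))) ∧
        Submodule.span R ({x'} : Set R) ⊔ (⨆ g, Submodule.span R ({w' g} : Set R)) = I ∧
        (∀ g, IsSimpleModule R (Submodule.span R ({w' g} : Set R))) ∧
        IsPrincipalIdealRing (R ⧸ Ideal.torsionOf R R x') := by
  intro I hI
  set L := ⨆ l, R ∙ w l
  have hL : IsLocalRing.maximalIdeal R ≤ L.annihilator := by
    rw [annihilator_iSup]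
    exact le_iInf fun l => (IsLocalRing.eq_maximalIdeal (hsimple l).annihilator_isMaximal).ge
  have hxL : Disjoint (R ∙ x) L :=
    (hindep none).mono_right <|
      iSup_le fun l => le_iSup₂_of_le (some l) (Option.some_ne_none l) le_rfl
  obtain ⟨x', hIx', hx'L, hpir'⟩ :=
    exists_span_singleton_sup_inf_eq hL hxL (hsum ▸ IsLocalRing.le_maximalIdeal hI)
  obtain ⟨Γ, w', hcard, hind, hsup, hsimple'⟩ :=
    exists_iSupIndep_isSimpleModule_spans_eq hL Submodule.span_range_eq_iSup inf_le_right
  exact ⟨Γ, x', w', by simpa using hcard,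
    iSupIndep_option_elim hind (hsup ▸ hx'L.mono_right inf_le_right), by rw [hsup, hIx'],
    hsimple', hpir'⟩
end

section
/- Let (R, M) be a commutative local ring. If every ideal of R is a direct sum of cyclic R-modules, then every ideal of R is a direct sum of cyclic R-modules at most two of which are not simple. -/
/-!
Write the maximal ideal as `M = ⨁ R ∙ w j`. A nonzero cyclic ideal `R ∙ x` fails to be simple
exactly when `M x ≠ 0`, i.e. when some `w j * x ≠ 0`, and then `w j * x` is a nonzero multiple of
`w j * w j`. One summand `w j` cannot detect two disjoint cyclic ideals: the ideals
`R ∙ (w j ^ n * w j ^ 2)` form a chain whose intersection `K` satisfies `K = w j K`, so `K = 0`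
because `K` is itself a direct sum of cyclics; hence the cyclic submodules of `R ∙ (w j * w j)` are
totally ordered. Three non-simple summands would thus be detected by three distinct `w j` with
nonzero squares. These are pairwise orthogonal, and for such `X, Y, Z` the ideal
`(X + Y, Y + Z)` is not a direct sum of cyclics.
-/

open Submodule IsLocalRing Finsupp

section CommRing

variable {R κ : Type*} [CommRing R]

theorem iSupIndep.pairwise_mul_eq_zero {ι : Type*} {w : ι → R}
    (hw : iSupIndep fun i => R ∙ w i) : Pairwise fun i j => w i * w j = 0 := fun i j hij =>
  disjoint_def.mp (hw.pairwiseDisjoint hij) _ (mem_span_singleton.mpr ⟨w j, mul_comm _ _⟩)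
    (mem_span_singleton.mpr ⟨w i, rfl⟩)

theorem mul_mem_span_singleton_mul {a b : R} (c : R) (h : a ∈ R ∙ b) : a * c ∈ R ∙ (b * c) := by
  obtain ⟨d, rfl⟩ := mem_span_singleton.mp h
  exact mem_span_singleton.mpr ⟨d, by simp only [smul_eq_mul, mul_assoc]⟩

theorem span_pow_mul_antitone (W E : R) : Antitone fun n : ℕ => R ∙ (W ^ n * E) :=
  antitone_nat_of_succ_le fun n =>
    span_singleton_le_iff_mem _ _ |>.mpr <| mem_span_singleton.mpr ⟨W, by ring⟩

theorem exists_linearCombination_eq_of_mem_iSup {t : κ → R} {x : R} (hx : x ∈ ⨆ k, R ∙ t k) :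
    ∃ c : κ →₀ R, linearCombination R t c = x := by
  rwa [← span_range_eq_iSup, ← range_linearCombination] at hx

theorem iSupIndep.mul_eq_of_linearCombination_eq {t : κ → R}
    (ht : iSupIndep fun k => R ∙ t k) {c d : κ →₀ R}
    (h : linearCombination R t c = linearCombination R t d) (k : κ) :
    c k * t k = d k * t k := by
  classical
  set s := c.support ∪ d.support
  have hsum : ∀ e : κ →₀ R, e.support ⊆ s →
      linearCombination R t e = ∑ k ∈ s, e k * t k := fun e he => by
    rw [linearCombination_apply, sum_of_support_subset e he _ (fun k _ => zero_smul R (t k))]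
    rfl
  by_cases hk : k ∈ s
  · refine (iSupIndep_iff_finsetSum_eq_imp_eq _).mp ht s (fun k => c k * t k)
      (fun k => d k * t k) (fun k _ => ⟨?_, ?_⟩) ?_ k hk
    · exact Ideal.mul_mem_left _ _ (mem_span_singleton_self _)
    · exact Ideal.mul_mem_left _ _ (mem_span_singleton_self _)
    · rw [← hsum c Finset.subset_union_left, ← hsum d Finset.subset_union_right, h]
  · simp only [s, Finset.mem_union, Finsupp.mem_support_iff, not_or, not_not] at hk
    rw [hk.1, hk.2]

theorem mul_mem_span_singleton_sq_of_mem_iSup {ι : Type*} {w : ι → R}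
    (hw : Pairwise fun i j => w i * w j = 0) {m : R} (hm : m ∈ ⨆ i, R ∙ w i) (j : ι) :
    m * w j ∈ R ∙ (w j * w j) := by
  induction hm using iSup_induction' with
  | mem i x hx =>
    by_cases hij : i = j
    · subst hij
      exact mul_mem_span_singleton_mul _ hx
    · obtain ⟨c, rfl⟩ := mem_span_singleton.mp hx
      rw [smul_eq_mul, mul_assoc, hw hij, mul_zero]
      exact zero_mem _
  | zero => simp
  | add x y _ _ hx hy => simpa only [add_mul] using add_mem hx hy

theorem exists_mul_ne_zero_of_mem_iSup {ι : Type*} {w : ι → R} {m v : R}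
    (hm : m ∈ ⨆ i, R ∙ w i) (hmv : m * v ≠ 0) : ∃ j, w j * v ≠ 0 := by
  contrapose! hmv with hw
  induction hm using iSup_induction' with
  | mem i x hx =>
    obtain ⟨c, rfl⟩ := mem_span_singleton.mp hx
    rw [smul_eq_mul, mul_assoc, hw i, mul_zero]
  | zero => simp
  | add x y _ _ hx hy => rw [add_mul, hx, hy, add_zero]

theorem Ideal.IsPrime.mul_mem_of_sub_mul_add_mem {P : Ideal R} (hP : P.IsPrime) {a b r s : R}
    (hsa : s * a ∈ P) (hrb : r * b ∈ P) (h : (r - s) * (a + b) ∈ P) : r * a ∈ P := by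
  by_cases ha : a ∈ P
  · exact P.mul_mem_left r ha
  have hs : s ∈ P := (hP.mem_or_mem hsa).resolve_right ha
  have : r * a = (r - s) * (a + b) - r * b + s * a + s * b := by ring
  rw [this]
  exact P.add_mem (P.add_mem (P.sub_mem h hrb) hsa) (P.mul_mem_right b hs)

end CommRing

section IsLocalRing

variable {R : Type*} [CommRing R] [IsLocalRing R]

theorem IsLocalRing.eq_zero_of_eq_mul {m x : R} (hm : m ∈ maximalIdeal R) (h : x = m * x) :
    x = 0 := by
  have hunit : IsUnit (1 - m) := isUnit_one_sub_self_of_mem_nonunits m hm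
  exact hunit.mul_right_eq_zero.mp (by rw [sub_mul, one_mul, ← h, sub_self])

theorem IsLocalRing.mem_maximalIdeal_of_mul_eq_zero {a x : R} (hx : x ≠ 0) (h : a * x = 0) :
    a ∈ maximalIdeal R :=
  fun ha => hx (ha.mul_right_eq_zero.mp h)

theorem IsLocalRing.mem_maximalIdeal_of_disjoint {x y : R} (h : Disjoint (R ∙ x) (R ∙ y))
    (hy : y ≠ 0) : x ∈ maximalIdeal R := by
  intro hx
  have hxtop : R ∙ x = ⊤ := Ideal.span_singleton_eq_top.mpr hx
  rw [hxtop, top_disjoint, span_singleton_eq_bot] at h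
  exact hy h

theorem IsLocalRing.isSimpleModule_span_singleton {x : R} (hx : x ≠ 0)
    (hMx : ∀ m ∈ maximalIdeal R, m * x = 0) : IsSimpleModule R (R ∙ x) := by
  have hann : Ideal.torsionOf R R x = maximalIdeal R :=
    le_antisymm
      (fun a ha => mem_maximalIdeal_of_mul_eq_zero hx ((Ideal.mem_torsionOf_iff x a).mp ha))
      (fun m hm => (Ideal.mem_torsionOf_iff x m).mpr (hMx m hm))
  have : IsSimpleModule R (R ⧸ Ideal.torsionOf R R x) := by
    rw [hann, isSimpleModule_iff_isCoatom, ← Ideal.isMaximal_def]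
    infer_instance
  exact IsSimpleModule.congr (Ideal.quotTorsionOfEquivSpanSingleton R R x).symm

end IsLocalRing

section DirectSumOfCyclics

variable {R : Type} [CommRing R] [IsLocalRing R]

theorem Ideal.IsDirectSumOfCyclics.eq_bot_of_forall_eq_mul {K : Ideal R}
    (hK : K.IsDirectSumOfCyclics)
    (hKM : ∀ x ∈ K, ∃ m ∈ maximalIdeal R, ∃ y ∈ K, x = m * y) : K = ⊥ := by
  obtain ⟨κ, t, ht, rfl⟩ := hK
  suffices ∀ j, t j = 0 by simp [this]
  intro j
  obtain ⟨m, hm, y, hy, hty⟩ := hKM (t j) (mem_iSup_of_mem j (mem_span_singleton_self _))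
  obtain ⟨c, rfl⟩ := exists_linearCombination_eq_of_mem_iSup hy
  have hcoeff := ht.mul_eq_of_linearCombination_eq (c := m • c) (d := single j 1)
    (by rw [map_smul, linearCombination_single, one_smul, smul_eq_mul, hty]) j
  rw [Finsupp.smul_apply, single_eq_same, one_mul, smul_eq_mul] at hcoeff
  exact IsLocalRing.eq_zero_of_eq_mul (Ideal.mul_mem_right _ _ hm) hcoeff.symm

variable {W E : R}

theorem span_pow_mul_le_span_singleton (hE : ∀ m ∈ maximalIdeal R, m * E ∈ R ∙ (W * E))
    {f : R} {n : ℕ} (hf : f ∈ R ∙ (W ^ n * E)) (hf' : f ∉ R ∙ (W ^ (n + 1) * E)) :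
    R ∙ (W ^ n * E) ≤ R ∙ f := by
  obtain ⟨c, rfl⟩ := mem_span_singleton.mp hf
  have hc : IsUnit c := by
    by_contra hc
    obtain ⟨d, hd⟩ := mem_span_singleton.mp (hE c hc)
    refine hf' (mem_span_singleton.mpr ⟨d, ?_⟩)
    simp only [smul_eq_mul] at hd ⊢
    linear_combination W ^ n * hd
  rw [span_singleton_smul_eq hc]

theorem iInf_span_pow_mul_eq_bot (h : ∀ I : Ideal R, I.IsDirectSumOfCyclics)
    (hW : W ∈ maximalIdeal R) (hE : ∀ m ∈ maximalIdeal R, m * E ∈ R ∙ (W * E)) :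
    ⨅ n : ℕ, R ∙ (W ^ n * E) = ⊥ := by
  refine (h _).eq_bot_of_forall_eq_mul fun x hx => ⟨W, hW, ?_⟩
  have hxJ : ∀ n, x ∈ R ∙ (W ^ n * E) := mem_iInf _ |>.mp hx
  obtain ⟨d, hd⟩ := mem_span_singleton.mp (hxJ 1)
  simp only [smul_eq_mul, pow_one] at hd
  by_cases hdE : d * E ∈ ⨅ n : ℕ, R ∙ (W ^ n * E)
  · exact ⟨d * E, hdE, by rw [← hd]; ring⟩
  -- `d * E` generates some layer of the chain, and then `x = W * (d * E)` generates the next one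
  -- while lying two layers deeper, so `x ∈ M x`.
  obtain ⟨n, hn, hn1⟩ := Nat.exists_not_and_succ_of_not_zero_of_exists
    (p := fun n => d * E ∉ R ∙ (W ^ n * E))
    (by simpa using Ideal.mul_mem_left _ d (mem_span_singleton_self E))
    (by simpa [mem_iInf] using hdE)
  obtain ⟨ρ, hρ⟩ := mem_span_singleton.mp
    (span_pow_mul_le_span_singleton hE (not_not.mp hn) hn1 (mem_span_singleton_self _))
  obtain ⟨σ, hσ⟩ := mem_span_singleton.mp (hxJ (n + 2))
  simp only [smul_eq_mul] at hρ hσ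
  refine ⟨0, zero_mem _, ?_⟩
  rw [mul_zero]
  refine IsLocalRing.eq_zero_of_eq_mul (m := σ * W * ρ)
    (Ideal.mul_mem_right _ _ (Ideal.mul_mem_left _ _ hW)) ?_
  linear_combination (-1 : R) * hσ + σ * W * ρ * hd - σ * W ^ 2 * hρ

theorem exists_span_singleton_eq_span_pow_mul (h : ∀ I : Ideal R, I.IsDirectSumOfCyclics)
    (hW : W ∈ maximalIdeal R) (hE : ∀ m ∈ maximalIdeal R, m * E ∈ R ∙ (W * E)) {f : R}
    (hf : f ∈ R ∙ E) (hf0 : f ≠ 0) : ∃ n : ℕ, R ∙ f = R ∙ (W ^ n * E) := by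
  have hex : ∃ n, f ∉ R ∙ (W ^ n * E) := by
    by_contra! hall
    exact hf0 (by simpa [iInf_span_pow_mul_eq_bot h hW hE] using mem_iInf _ |>.mpr hall)
  obtain ⟨n, hn, hn1⟩ := Nat.exists_not_and_succ_of_not_zero_of_exists
    (p := fun n => f ∉ R ∙ (W ^ n * E)) (by simpa using hf) hex
  exact ⟨n, le_antisymm ((span_singleton_le_iff_mem _ _).mpr (not_not.mp hn))
    (span_pow_mul_le_span_singleton hE (not_not.mp hn) hn1)⟩

theorem not_disjoint_span_singleton_of_mem (h : ∀ I : Ideal R, I.IsDirectSumOfCyclics)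
    (hW : W ∈ maximalIdeal R) (hE : ∀ m ∈ maximalIdeal R, m * E ∈ R ∙ (W * E)) {f g : R}
    (hf : f ∈ R ∙ E) (hg : g ∈ R ∙ E) (hf0 : f ≠ 0) (hg0 : g ≠ 0) :
    ¬ Disjoint (R ∙ f) (R ∙ g) := by
  intro hfg
  obtain ⟨n, hn⟩ := exists_span_singleton_eq_span_pow_mul h hW hE hf hf0
  obtain ⟨k, hk⟩ := exists_span_singleton_eq_span_pow_mul h hW hE hg hg0
  rcases le_total n k with hnk | hkn
  · have hgf : R ∙ g ≤ R ∙ f := hn ▸ hk ▸ span_pow_mul_antitone W E hnk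
    exact hg0 (span_singleton_eq_bot.mp (disjoint_self.mp (hfg.symm.mono_right hgf)))
  · have hfg' : R ∙ f ≤ R ∙ g := hn ▸ hk ▸ span_pow_mul_antitone W E hkn
    exact hf0 (span_singleton_eq_bot.mp (disjoint_self.mp (hfg.mono_right hfg')))

theorem mul_self_eq_zero_of_pairwise_mul_eq_zero (h : ∀ I : Ideal R, I.IsDirectSumOfCyclics)
    {X Y Z : R} (hXY : X * Y = 0) (hXZ : X * Z = 0) (hYZ : Y * Z = 0) (hX : X * X ≠ 0)
    (hY : Y * Y ≠ 0) : Z * Z = 0 := by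
  by_contra hZ
  obtain ⟨κ, t, ht, hI⟩ := h (Ideal.span {X + Y, Y + Z})
  have hmem : ∀ u ∈ Ideal.span {X + Y, Y + Z}, ∃ c, linearCombination R t c = u :=
    fun u hu => exists_linearCombination_eq_of_mem_iSup (hI ▸ hu)
  obtain ⟨r, hr⟩ := hmem (X + Y) (Ideal.subset_span (by simp))
  obtain ⟨s, hs⟩ := hmem (Y + Z) (Ideal.subset_span (by simp))
  choose a b hab using fun k =>
    Ideal.mem_span_pair.mp (hI ▸ mem_iSup_of_mem k (mem_span_singleton_self (t k)))
  have hcoeff (u : R) {c d : κ →₀ R}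
      (hcd : u * linearCombination R t c = u * linearCombination R t d) (k : κ) :
      u * c k * t k = u * d k * t k := by
    simpa only [Finsupp.smul_apply, smul_eq_mul] using
      ht.mul_eq_of_linearCombination_eq (c := u • c) (d := u • d)
        (by simpa only [map_smul, smul_eq_mul] using hcd) k
  -- `X`, `Y`, `Z` act on `t k` as `a k * X²`, `(a k + b k) * Y²`, `b k * Z²`; read the relations
  -- `X (Y + Z) = 0`, `Z (X + Y) = 0`, `Y (X + Y) = Y (Y + Z)` summand by summand.
  have hsa (k : κ) : s k * a k ∈ maximalIdeal R := by
    have := hcoeff X (c := s) (d := 0) (by rw [hs, map_zero]; linear_combination hXY + hXZ) k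
    rw [← hab k, Finsupp.coe_zero, Pi.zero_apply] at this
    refine IsLocalRing.mem_maximalIdeal_of_mul_eq_zero hX ?_
    linear_combination this - (s k * a k + s k * b k) * hXY - s k * b k * hXZ
  have hrb (k : κ) : r k * b k ∈ maximalIdeal R := by
    have := hcoeff Z (c := r) (d := 0) (by rw [hr, map_zero]; linear_combination hXZ + hYZ) k
    rw [← hab k, Finsupp.coe_zero, Pi.zero_apply] at this
    refine IsLocalRing.mem_maximalIdeal_of_mul_eq_zero hZ ?_
    linear_combination this - r k * a k * hXZ - (r k * a k + r k * b k) * hYZ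
  have hrs (k : κ) : (r k - s k) * (a k + b k) ∈ maximalIdeal R := by
    have := hcoeff Y (c := r) (d := s) (by rw [hr, hs]; linear_combination hXY - hYZ) k
    rw [← hab k] at this
    refine IsLocalRing.mem_maximalIdeal_of_mul_eq_zero hY ?_
    linear_combination this - (r k - s k) * a k * hXY - (r k - s k) * b k * hYZ
  have hdiag : X * linearCombination R t r = (r.sum fun k e => e * a k) * (X * X) := by
    rw [linearCombination_apply, Finsupp.mul_sum, Finsupp.sum_mul]
    refine Finset.sum_congr rfl fun k _ => ?_
    dsimp only
    rw [smul_eq_mul, ← hab k]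
    linear_combination (r k * a k + r k * b k) * hXY + r k * b k * hXZ
  have hone : 1 - r.sum (fun k e => e * a k) ∈ maximalIdeal R :=
    IsLocalRing.mem_maximalIdeal_of_mul_eq_zero hX (by linear_combination hdiag - X * hr - hXY)
  have hsum : r.sum (fun k e => e * a k) ∈ maximalIdeal R := Ideal.sum_mem _ fun k _ =>
    (maximalIdeal.isMaximal R).isPrime.mul_mem_of_sub_mul_add_mem (hsa k) (hrb k) (hrs k)
  have hone' := (maximalIdeal R).add_mem hone hsum
  rw [sub_add_cancel] at hone'
  exact (maximalIdeal R).ne_top_iff_one.mp (maximalIdeal.isMaximal R).ne_top hone'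

theorem mul_eq_zero_of_disjoint_of_mul_ne_zero (h : ∀ I : Ideal R, I.IsDirectSumOfCyclics)
    {ι : Type} {w : ι → R} (hw : iSupIndep fun i => R ∙ w i)
    (hwM : ⨆ i, R ∙ w i = maximalIdeal R) {V V' : R} (hV : V ∈ maximalIdeal R)
    (hV' : V' ∈ maximalIdeal R) (hVV' : Disjoint (R ∙ V) (R ∙ V')) {j : ι}
    (hjV : V * w j ≠ 0) : V' * w j = 0 := by
  by_contra hjV'
  have hsq (m : R) (hm : m ∈ maximalIdeal R) : m * w j ∈ R ∙ (w j * w j) :=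
    mul_mem_span_singleton_sq_of_mem_iSup hw.pairwise_mul_eq_zero (hwM ▸ hm) j
  have hwj : w j ∈ maximalIdeal R := hwM ▸ mem_iSup_of_mem j (mem_span_singleton_self _)
  have hE (m : R) (hm : m ∈ maximalIdeal R) : m * (w j * w j) ∈ R ∙ (w j * (w j * w j)) := by
    simpa only [mul_assoc] using mul_mem_span_singleton_mul (w j) (hsq m hm)
  refine not_disjoint_span_singleton_of_mem h hwj hE (hsq V hV) (hsq V' hV') hjV hjV' ?_
  have hle (U : R) : R ∙ (U * w j) ≤ R ∙ U :=
    (span_singleton_le_iff_mem _ _).mpr (Ideal.mul_mem_right _ _ (mem_span_singleton_self U))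
  exact hVV'.mono (hle V) (hle V')

theorem forall_mem_maximalIdeal_mul_eq_zero_of_pairwise_disjoint
    (h : ∀ I : Ideal R, I.IsDirectSumOfCyclics)
    {X Y Z : R} (hXY : Disjoint (R ∙ X) (R ∙ Y)) (hXZ : Disjoint (R ∙ X) (R ∙ Z))
    (hYZ : Disjoint (R ∙ Y) (R ∙ Z)) (hX : ∃ m ∈ maximalIdeal R, m * X ≠ 0)
    (hY : ∃ m ∈ maximalIdeal R, m * Y ≠ 0) : ∀ m ∈ maximalIdeal R, m * Z = 0 := by
  by_contra! hZ
  have hne : ∀ V : R, (∃ m ∈ maximalIdeal R, m * V ≠ 0) → V ≠ 0 := by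
    rintro V ⟨m, -, hm⟩ rfl
    exact hm (mul_zero m)
  have hXM := IsLocalRing.mem_maximalIdeal_of_disjoint hXY (hne Y hY)
  have hYM := IsLocalRing.mem_maximalIdeal_of_disjoint hYZ (hne Z hZ)
  have hZM := IsLocalRing.mem_maximalIdeal_of_disjoint hXZ.symm (hne X hX)
  obtain ⟨ι, w, hw, hwM⟩ := h (maximalIdeal R)
  have hww := hw.pairwise_mul_eq_zero
  have hdetect (V : R) (hV : ∃ m ∈ maximalIdeal R, m * V ≠ 0) : ∃ j, V * w j ≠ 0 := by
    obtain ⟨m, hm, hmV⟩ := hV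
    obtain ⟨j, hj⟩ := exists_mul_ne_zero_of_mem_iSup (hwM ▸ hm) hmV
    exact ⟨j, by rwa [mul_comm]⟩
  have hsq_ne (V : R) (hV : V ∈ maximalIdeal R) (j : ι) (hjV : V * w j ≠ 0) :
      w j * w j ≠ 0 := fun h0 =>
    hjV (by simpa [h0] using mul_mem_span_singleton_sq_of_mem_iSup hww (hwM ▸ hV) j)
  obtain ⟨jX, hjX⟩ := hdetect X hX
  obtain ⟨jY, hjY⟩ := hdetect Y hY
  obtain ⟨jZ, hjZ⟩ := hdetect Z hZ
  have hXY' : jX ≠ jY := by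
    rintro rfl
    exact hjY (mul_eq_zero_of_disjoint_of_mul_ne_zero h hw hwM hXM hYM hXY hjX)
  have hXZ' : jX ≠ jZ := by
    rintro rfl
    exact hjZ (mul_eq_zero_of_disjoint_of_mul_ne_zero h hw hwM hXM hZM hXZ hjX)
  have hYZ' : jY ≠ jZ := by
    rintro rfl
    exact hjZ (mul_eq_zero_of_disjoint_of_mul_ne_zero h hw hwM hYM hZM hYZ hjY)
  exact hsq_ne Z hZM jZ hjZ (mul_self_eq_zero_of_pairwise_mul_eq_zero h (hww hXY') (hww hXZ')
    (hww hYZ') (hsq_ne X hXM jX hjX) (hsq_ne Y hYM jY hjY))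

end DirectSumOfCyclics

theorem exists_forall_eq_or_eq_of_forall_three {ι : Type*} [Nonempty ι] {p : ι → Prop}
    (h : ∀ a b c, p a → p b → p c → a = b ∨ a = c ∨ b = c) :
    ∃ i₁ i₂, ∀ i, p i → i = i₁ ∨ i = i₂ := by
  by_cases ha : ∃ a, p a
  · obtain ⟨a, ha⟩ := ha
    by_cases hb : ∃ b, p b ∧ b ≠ a
    · obtain ⟨b, hb, hba⟩ := hb
      refine ⟨a, b, fun i hi => ?_⟩
      rcases h i a b hi ha hb with e | e | e
      · exact Or.inl e
      · exact Or.inr e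
      · exact absurd e hba.symm
    · push Not at hb
      exact ⟨a, a, fun i hi => Or.inl (hb i hi)⟩
  · push Not at ha
    obtain ⟨i⟩ := ‹Nonempty ι›
    exact ⟨i, i, fun j hj => absurd hj (ha j)⟩

/-- If every ideal of a local ring is a direct sum of cyclic modules, then every ideal is
a direct sum of cyclic modules at most two of which are not simple. -/
theorem ideals_directSum_at_most_two_not_simple (R : Type) [CommRing R] [IsLocalRing R]
    (h : ∀ I : Ideal R, I.IsDirectSumOfCyclics) :
    ∀ I : Ideal R, ∃ (ι : Type) (x : ι → R),
      iSupIndep (fun i => Submodule.span R ({x i} : Set R)) ∧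
      (⨆ i, Submodule.span R ({x i} : Set R)) = I ∧
      ∃ i₁ i₂ : ι, ∀ i, ¬ IsSimpleModule R (Submodule.span R ({x i} : Set R)) →
        i = i₁ ∨ i = i₂ := by
  intro I
  obtain ⟨ι, x, hind, hsup⟩ := h I
  let ι' := {i // R ∙ x i ≠ ⊥}
  have hind' : iSupIndep fun i : ι' => R ∙ x i.1 := hind.comp Subtype.val_injective
  have hsup' : ⨆ i : ι', R ∙ x i.1 = I := (iSup_ne_bot_subtype _).trans hsup
  cases isEmpty_or_nonempty ι' with
  | inl _ =>
    refine ⟨Unit, 0, fun _ => by simp, ?_, (), (), fun _ _ => Or.inl rfl⟩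
    rw [← hsup', iSup_of_empty' (fun i : ι' => R ∙ x i.1)]
    simp
  | inr _ =>
    refine ⟨ι', fun i => x i.1, hind', hsup', exists_forall_eq_or_eq_of_forall_three ?_⟩
    intro a b c ha hb hc
    by_contra! hne
    have hkill (i : ι') (hi : ¬IsSimpleModule R (R ∙ x i.1)) :
        ∃ m ∈ maximalIdeal R, m * x i.1 ≠ 0 := by
      by_contra! hMx
      exact hi (IsLocalRing.isSimpleModule_span_singleton (mt span_singleton_eq_bot.mpr i.2) hMx)
    obtain ⟨m, hm, hmc⟩ := hkill c hc
    exact hmc (forall_mem_maximalIdeal_mul_eq_zero_of_pairwise_disjoint h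
      (hind'.pairwiseDisjoint hne.1) (hind'.pairwiseDisjoint hne.2.1)
      (hind'.pairwiseDisjoint hne.2.2) (hkill a ha) (hkill b hb) m hm)
end
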